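/- arXiv:1910.11973 — 4 statements merged into one kernel-verified Lean document; each statement's English description precedes it below -/
import Mathlib

section
/- For any N-database K-message private information retrieval code with N ≥ 2, any n ∈ {1,...,N}, and any k ∈ {1,...,K-1}, the quantity V_n^k := H(A_{1:n-1,n+1:N}^[k], S_n | W_1,...,W_k, F) satisfies V_n^k ≥ ((N-2)/(N-1))·H(S_n | F, W_1,...,W_k) + (L log₂|X|)/(N-1) + V_n^{k+1}/(N-1). -/
open scoped Classical
open Real

noncomputable section

/-- A probability mass function on a finite sample space. -/
structure FinProb (Ω : Type) [Fintype Ω] where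
  p : Ω → ℝ
  nonneg : ∀ ω, 0 ≤ p ω
  sum_one : ∑ ω, p ω = 1

namespace FinProb

variable {Ω : Type} [Fintype Ω]

/-- The probability of an event. -/
def prob (P : FinProb Ω) (E : Ω → Prop) : ℝ :=
  ∑ ω, if E ω then P.p ω else 0

/-- The Shannon entropy (in bits) of a random variable `Z` (with the usual
convention `0 · log 0 = 0`, automatic since `Real.logb 2 0 = 0`). -/
def entH {σ : Type} (P : FinProb Ω) (Z : Ω → σ) : ℝ :=
  ∑ z ∈ Finset.univ.image Z,
    -(P.prob fun ω => Z ω = z) * Real.logb 2 (P.prob fun ω => Z ω = z)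

/-- The conditional Shannon entropy (in bits) `H(Z | C)`. -/
def condH {σ τ : Type} (P : FinProb Ω) (Z : Ω → σ) (C : Ω → τ) : ℝ :=
  P.entH (fun ω => (Z ω, C ω)) - P.entH C

end FinProb

/-- The uniform distribution on a finite nonempty set. -/
def uniformProb (Ω : Type) [Fintype Ω] [Nonempty Ω] : FinProb Ω where
  p _ := (Fintype.card Ω : ℝ)⁻¹
  nonneg _ := by positivity
  sum_one := by
    rw [Finset.sum_const, Finset.card_univ, nsmul_eq_mul,
      mul_inv_cancel₀ (by exact_mod_cast Fintype.card_ne_zero)]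

/-- The sample space of a PIR code: a pair of (message realizations, random key).
The `K` messages each consist of `L` symbols from the alphabet `X`. -/
abbrev PIRSamp (K L : ℕ) (X F : Type) : Type := (Fin K → Fin L → X) × F

/-- The underlying probability distribution of a PIR code: the `K` messages are
mutually independent, each uniform on `X^L`, and the random key is uniform on `F`
and independent of the messages; equivalently, `(W_{1:K}, F)` is uniform. -/
def pirP (K L : ℕ) (X F : Type) [Fintype X] [Nonempty X] [Fintype F] [Nonempty F] :
    FinProb (PIRSamp K L X F) := uniformProb _

/-- An `N`-database `K`-message private information retrieval code with message length `L`,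
message alphabet `X`, answer alphabet `Y`, random-key set `F`, query sets `Q n` and
storage sets `S n`.  The stored content of database `n` is `store n` applied to the messages;
the query to database `n` is `query n k F`; the answer is a string of `len n q` symbols of `Y`
(a deterministic function of the query and the stored content); `correct` states that the
desired message is a deterministic function of the answers and the random key, and `privacy`
states that the query distribution does not depend on the desired message index. -/
structure PIRCode (N K L : ℕ) (X Y F : Type) (Q S : Fin N → Type)
    [Fintype X] [Nonempty X] [Fintype Y] [Fintype F] [Nonempty F]
    [∀ n, Fintype (Q n)] [∀ n, Fintype (S n)] : Type where
  hN : 0 < N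
  hK : 0 < K
  hL : 0 < L
  hX : 2 ≤ Fintype.card X
  store : (n : Fin N) → (Fin K → Fin L → X) → S n
  query : (n : Fin N) → Fin K → F → Q n
  len : (n : Fin N) → Q n → ℕ
  answer : (n : Fin N) → (q : Q n) → S n → (Fin (len n q) → Y)
  correct : ∀ (k : Fin K) (ω ω' : PIRSamp K L X F), ω.2 = ω'.2 →
    (∀ n : Fin N, List.ofFn (answer n (query n k ω.2) (store n ω.1)) =
      List.ofFn (answer n (query n k ω'.2) (store n ω'.1))) →
    ω.1 k = ω'.1 k
  privacy : ∀ (n : Fin N) (k k' : Fin K) (q : Q n),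
    (pirP K L X F).prob (fun ω => query n k ω.2 = q) =
      (pirP K L X F).prob (fun ω => query n k' ω.2 = q)

namespace PIRCode

variable {N K L : ℕ} {X Y F : Type} {Q S : Fin N → Type}
  [Fintype X] [Nonempty X] [Fintype Y] [Fintype F] [Nonempty F]
  [∀ n, Fintype (Q n)] [∀ n, Fintype (S n)]

/-- Message `k` (0-indexed) as a random variable. -/
def Wrv (_c : PIRCode N K L X Y F Q S) (k : Fin K) : PIRSamp K L X F → (Fin L → X) :=
  fun ω => ω.1 k

/-- The random key as a random variable. -/
def Frv (_c : PIRCode N K L X Y F Q S) : PIRSamp K L X F → F := fun ω => ω.2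

/-- The stored content `S_n` as a random variable. -/
def Srv (c : PIRCode N K L X Y F Q S) (n : Fin N) : PIRSamp K L X F → S n :=
  fun ω => c.store n ω.1

/-- The query `Q_n^{[k]}` as a random variable. -/
def Qrv (c : PIRCode N K L X Y F Q S) (n : Fin N) (k : Fin K) : PIRSamp K L X F → Q n :=
  fun ω => c.query n k ω.2

/-- The answer string `A_n^{[k]}` of database `n` when retrieving message `k`. -/
def Arv (c : PIRCode N K L X Y F Q S) (n : Fin N) (k : Fin K) : PIRSamp K L X F → List Y :=
  fun ω => List.ofFn (c.answer n (c.query n k ω.2) (c.store n ω.1))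

/-- The answer string `A_n^{(q)}` of database `n` to the fixed query `q`. -/
def AnsFix (c : PIRCode N K L X Y F Q S) (n : Fin N) (q : Q n) : PIRSamp K L X F → List Y :=
  fun ω => List.ofFn (c.answer n q (c.store n ω.1))

/-- The operational storage cost `α_n = log₂|𝒮_n| / (L log₂|X|)` of database `n`. -/
def alphaN (_c : PIRCode N K L X Y F Q S) (n : Fin N) : ℝ :=
  Real.logb 2 (Fintype.card (S n)) / (L * Real.logb 2 (Fintype.card X))

/-- The average per-node storage cost `α`. -/
def alphaAvg (c : PIRCode N K L X Y F Q S) : ℝ := (∑ n, c.alphaN n) / N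

/-- The expected answer length `E[ℓ_n(Q_n^{[k]})]`. -/
def expLen (c : PIRCode N K L X Y F Q S) (n : Fin N) (k : Fin K) : ℝ :=
  ∑ ω : PIRSamp K L X F, (pirP K L X F).p ω * (c.len n (c.query n k ω.2))

/-- The operational download cost of database `n` for message index `k`:
`E[ℓ_n(Q_n^{[k]})]·log₂|Y| / (L log₂|X|)`. -/
def betaNK (c : PIRCode N K L X Y F Q S) (n : Fin N) (k : Fin K) : ℝ :=
  c.expLen n k * Real.logb 2 (Fintype.card Y) / (L * Real.logb 2 (Fintype.card X))

/-- The operational download cost `β_n` of database `n` (independent of the retrieved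
message index by privacy, hence evaluated at the first message). -/
def betaN (c : PIRCode N K L X Y F Q S) (n : Fin N) : ℝ := c.betaNK n ⟨0, c.hK⟩

/-- The average per-node download cost `β`. -/
def betaAvg (c : PIRCode N K L X Y F Q S) : ℝ := (∑ n, c.betaN n) / N

/-- The informational storage cost `α'_n = H(S_n) / (L log₂|X|)`. -/
def alphaInfoN (c : PIRCode N K L X Y F Q S) (n : Fin N) : ℝ :=
  (pirP K L X F).entH (c.Srv n) / (L * Real.logb 2 (Fintype.card X))

/-- The informational download cost `β'_n = H(A_n^{[k]} | F) / (L log₂|X|)`. -/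
def betaInfoNK (c : PIRCode N K L X Y F Q S) (n : Fin N) (k : Fin K) : ℝ :=
  (pirP K L X F).condH (c.Arv n k) c.Frv / (L * Real.logb 2 (Fintype.card X))

/-- The first `m` messages `W_{1:m}` as a single random variable (messages with
0-indexed position `≥ m` are blanked out by `none`). -/
def WleRv (_c : PIRCode N K L X Y F Q S) (m : ℕ) :
    PIRSamp K L X F → (Fin K → Option (Fin L → X)) :=
  fun ω i => if (i : ℕ) < m then some (ω.1 i) else none

/-- All answers `A_{1:N}^{[k]}` as a single random variable. -/
def AallRv (c : PIRCode N K L X Y F Q S) (k : Fin K) : PIRSamp K L X F → (Fin N → List Y) :=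
  fun ω n => c.Arv n k ω

/-- The answers `A_{1:n-1,n+1:N}^{[k]}` of all databases except database `n`. -/
def AexcRv (c : PIRCode N K L X Y F Q S) (n : Fin N) (k : Fin K) :
    PIRSamp K L X F → (Fin N → Option (List Y)) :=
  fun ω n' => if n' = n then none else some (c.Arv n' k ω)

/-- The stored contents `S_{1:n-1,n+1:N}` of all databases except database `n`. -/
def SexcRv (c : PIRCode N K L X Y F Q S) (n : Fin N) :
    PIRSamp K L X F → ((n' : Fin N) → Option (S n')) :=
  fun ω n' => if n' = n then none else some (c.store n' ω.1)

/-- `T^k = H(A_{1:N}^{[k]} | W_{1:k}, F)`; here `k : Fin K` is the 0-indexed message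
index, corresponding to the paper's message index `k+1`. -/
def T (c : PIRCode N K L X Y F Q S) (k : Fin K) : ℝ :=
  (pirP K L X F).condH (c.AallRv k) (fun ω => (c.WleRv ((k : ℕ) + 1) ω, ω.2))

/-- `V_n^k = H(A_{1:n-1,n+1:N}^{[k]}, S_n | W_{1:k}, F)` (0-indexed `k`, as in `T`). -/
def Vnk (c : PIRCode N K L X Y F Q S) (n : Fin N) (k : Fin K) : ℝ :=
  (pirP K L X F).condH (fun ω => (c.AexcRv n k ω, c.Srv n ω))
    (fun ω => (c.WleRv ((k : ℕ) + 1) ω, ω.2))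

/-- `V^k = (1/N) Σ_n V_n^k`. -/
def Vavg (c : PIRCode N K L X Y F Q S) (k : Fin K) : ℝ := (∑ n, c.Vnk n k) / N

end PIRCode

/-! ### Auxiliary lemmas for the proof -/

namespace FinProb

variable {Ω : Type} [Fintype Ω] {σ τ υ : Type} {P : FinProb Ω}

lemma prob_congr {E E' : Ω → Prop} (h : ∀ ω, E ω ↔ E' ω) : P.prob E = P.prob E' := by
  unfold prob
  exact Finset.sum_congr rfl fun ω _ => by simp only [h ω]

lemma prob_nonneg' (E : Ω → Prop) : 0 ≤ P.prob E :=
  Finset.sum_nonneg fun ω _ => by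
    by_cases h : E ω <;> simp [h, P.nonneg ω]

lemma prob_mono {E E' : Ω → Prop} (h : ∀ ω, E ω → E' ω) : P.prob E ≤ P.prob E' :=
  Finset.sum_le_sum fun ω _ => by
    by_cases hE : E ω
    · simp [hE, h ω hE]
    · by_cases hE' : E' ω <;> simp [hE, hE', P.nonneg ω]

lemma prob_pos (hP : ∀ ω, 0 < P.p ω) {E : Ω → Prop} (ω₀ : Ω) (h : E ω₀) :
    0 < P.prob E := by
  have : P.p ω₀ ≤ P.prob E := by
    unfold prob
    have := Finset.single_le_sum (f := fun ω => if E ω then P.p ω else 0)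
      (fun ω _ => by by_cases hE : E ω <;> simp [hE, P.nonneg ω])
      (Finset.mem_univ ω₀)
    simpa [h] using this
  linarith [hP ω₀]

lemma sum_image_prob {Z : Ω → σ} {s : Finset σ} (hs : ∀ ω, Z ω ∈ s) (f : σ → ℝ) :
    ∑ z ∈ s, (P.prob fun ω => Z ω = z) * f z
      = ∑ ω, P.p ω * f (Z ω) := by
  unfold prob
  simp only [Finset.sum_mul]
  rw [Finset.sum_comm]
  refine Finset.sum_congr rfl fun ω _ => ?_
  rw [Finset.sum_eq_single_of_mem (Z ω) (hs ω)]
  · simp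
  · intro z _ hz
    simp [Ne.symm hz]

lemma entH_eq_sum (Z : Ω → σ) :
    P.entH Z = ∑ ω, P.p ω * -Real.logb 2 (P.prob fun ω' => Z ω' = Z ω) := by
  unfold entH
  rw [← sum_image_prob (fun ω => Finset.mem_image_of_mem Z (Finset.mem_univ ω))
    (fun z => -Real.logb 2 (P.prob fun ω' => Z ω' = z))]
  exact Finset.sum_congr rfl fun z _ => by ring

/-- If `Z` and `Z'` mutually determine each other, they have the same entropy. -/
lemma entH_congr {Z : Ω → σ} {Z' : Ω → τ}
    (h : ∀ ω ω', Z ω = Z ω' ↔ Z' ω = Z' ω') : P.entH Z = P.entH Z' := by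
  rw [entH_eq_sum, entH_eq_sum]
  refine Finset.sum_congr rfl fun ω _ => ?_
  rw [prob_congr (fun ω' => (h ω' ω))]

lemma condH_congr {α : Type} {Z : Ω → σ} {Z' : Ω → υ} {C : Ω → τ} {C' : Ω → α}
    (hC : ∀ ω ω', C ω = C ω' ↔ C' ω = C' ω')
    (hZC : ∀ ω ω', (Z ω = Z ω' ∧ C ω = C ω') ↔ (Z' ω = Z' ω' ∧ C' ω = C' ω')) :
    P.condH Z C = P.condH Z' C' := by
  unfold condH
  rw [entH_congr (Z := fun ω => (Z ω, C ω)) (Z' := fun ω => (Z' ω, C' ω))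
    (fun ω ω' => by simp only [Prod.mk.injEq]; exact hZC ω ω'), entH_congr hC]

lemma condH_congr' {Z : Ω → σ} {Z' : Ω → σ} {C : Ω → τ}
    (h : ∀ ω, Z ω = Z' ω) : P.condH Z C = P.condH Z' C := by
  have : Z = Z' := funext h
  rw [this]

/-- Chain rule. -/
lemma condH_pair (Z₁ : Ω → σ) (Z₂ : Ω → υ) (C : Ω → τ) :
    P.condH (fun ω => (Z₁ ω, Z₂ ω)) C
      = P.condH Z₂ C + P.condH Z₁ (fun ω => (Z₂ ω, C ω)) := by
  unfold condH
  have : P.entH (fun ω => ((Z₁ ω, Z₂ ω), C ω)) = P.entH (fun ω => (Z₁ ω, (Z₂ ω, C ω))) :=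
    entH_congr fun ω ω' => by simp only [Prod.mk.injEq]; tauto
  rw [this]; ring

lemma condH_eq_zero_of_determined {Z : Ω → σ} {C : Ω → τ}
    (h : ∀ ω ω', C ω = C ω' → Z ω = Z ω') : P.condH Z C = 0 := by
  unfold condH
  rw [entH_congr (Z := fun ω => (Z ω, C ω)) (Z' := C)
    (fun ω ω' => by simp only [Prod.mk.injEq]; exact ⟨fun hh => hh.2, fun hh => ⟨h ω ω' hh, hh⟩⟩)]
  ring

end FinProb

namespace FinProb

variable {Ω : Type} [Fintype Ω] {σ τ υ : Type} {P : FinProb Ω}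

lemma sum_image_prob_inter {Z : Ω → σ} {s : Finset σ} (hs : ∀ ω, Z ω ∈ s) (E : Ω → Prop) :
    ∑ z ∈ s, (P.prob fun ω => Z ω = z ∧ E ω) = P.prob E := by
  unfold prob
  rw [Finset.sum_comm]
  refine Finset.sum_congr rfl fun ω _ => ?_
  by_cases hE : E ω
  · rw [Finset.sum_eq_single_of_mem (Z ω) (hs ω)]
    · simp [hE]
    · intro z _ hz
      simp [Ne.symm hz]
  · simp [hE]

lemma condH_eq_sum (hP : ∀ ω, 0 < P.p ω) (Z : Ω → σ) (C : Ω → τ) :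
    P.condH Z C = ∑ ω, P.p ω *
      -Real.logb 2 ((P.prob fun ω' => Z ω' = Z ω ∧ C ω' = C ω)
        / (P.prob fun ω' => C ω' = C ω)) := by
  unfold condH
  rw [entH_eq_sum, entH_eq_sum, ← Finset.sum_sub_distrib]
  refine Finset.sum_congr rfl fun ω _ => ?_
  have h1 : (P.prob fun ω' => (Z ω', C ω') = (Z ω, C ω))
      = P.prob fun ω' => Z ω' = Z ω ∧ C ω' = C ω :=
    prob_congr fun ω' => by simp [Prod.ext_iff]
  have hZC : 0 < P.prob fun ω' => Z ω' = Z ω ∧ C ω' = C ω := prob_pos hP ω ⟨rfl, rfl⟩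
  have hC : 0 < P.prob fun ω' => C ω' = C ω := prob_pos hP ω rfl
  rw [h1, Real.logb_div (ne_of_gt hZC) (ne_of_gt hC)]
  ring

lemma condH_nonneg (hP : ∀ ω, 0 < P.p ω) (Z : Ω → σ) (C : Ω → τ) :
    0 ≤ P.condH Z C := by
  rw [condH_eq_sum hP]
  refine Finset.sum_nonneg fun ω _ => ?_
  have h1 : 0 < P.prob fun ω' => Z ω' = Z ω ∧ C ω' = C ω := prob_pos hP ω ⟨rfl, rfl⟩
  have h2 : (P.prob fun ω' => Z ω' = Z ω ∧ C ω' = C ω) ≤ P.prob fun ω' => C ω' = C ω :=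
    prob_mono fun ω' h => h.2
  have hlog : Real.logb 2 ((P.prob fun ω' => Z ω' = Z ω ∧ C ω' = C ω)
      / (P.prob fun ω' => C ω' = C ω)) ≤ 0 :=
    Real.logb_nonpos one_lt_two (le_of_lt (div_pos h1 (lt_of_lt_of_le h1 h2)))
      (div_le_one (lt_of_lt_of_le h1 h2) |>.2 h2)
  exact mul_nonneg (le_of_lt (hP ω)) (by linarith)

lemma condH_mono_of_determines (hP : ∀ ω, 0 < P.p ω) {Z : Ω → σ} {Z' : Ω → υ}
    (h : ∀ ω ω', Z ω = Z ω' → Z' ω = Z' ω') (C : Ω → τ) :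
    P.condH Z' C ≤ P.condH Z C := by
  have e : P.condH Z C = P.condH (fun ω => (Z ω, Z' ω)) C := by
    refine condH_congr (fun _ _ => Iff.rfl) fun ω ω' => ?_
    simp only [Prod.mk.injEq]
    exact ⟨fun hh => ⟨⟨hh.1, h ω ω' hh.1⟩, hh.2⟩, fun hh => ⟨hh.1.1, hh.2⟩⟩
  rw [e, condH_pair]
  have := condH_nonneg hP Z (fun ω => (Z' ω, C ω))
  linarith

/-- Conditioning on more reduces conditional entropy. -/
lemma condH_pair_le (hP : ∀ ω, 0 < P.p ω) (Z : Ω → σ) (D : Ω → υ) (C : Ω → τ) :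
    P.condH Z (fun ω => (D ω, C ω)) ≤ P.condH Z C := by
  classical
  set qC : τ → ℝ := fun cc => P.prob fun ω' => C ω' = cc with hqCdef
  set qZC : σ × τ → ℝ := fun r => P.prob fun ω' => Z ω' = r.1 ∧ C ω' = r.2 with hqZCdef
  set qDC : υ × τ → ℝ := fun r => P.prob fun ω' => D ω' = r.1 ∧ C ω' = r.2 with hqDCdef
  set qZDC : σ × υ × τ → ℝ :=
    fun r => P.prob fun ω' => Z ω' = r.1 ∧ D ω' = r.2.1 ∧ C ω' = r.2.2 with hqZDCdef
  have hqCpos : ∀ ω, 0 < qC (C ω) := fun ω => prob_pos hP ω rfl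
  have hqZCpos : ∀ ω, 0 < qZC (Z ω, C ω) := fun ω => prob_pos hP ω ⟨rfl, rfl⟩
  have hqDCpos : ∀ ω, 0 < qDC (D ω, C ω) := fun ω => prob_pos hP ω ⟨rfl, rfl⟩
  have hqZDCpos : ∀ ω, 0 < qZDC (Z ω, D ω, C ω) := fun ω => prob_pos hP ω ⟨rfl, rfl, rfl⟩
  set t : Ω → ℝ := fun ω =>
    qZC (Z ω, C ω) * qDC (D ω, C ω) / (qC (C ω) * qZDC (Z ω, D ω, C ω)) with htdef
  have htpos : ∀ ω, 0 < t ω := fun ω =>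
    div_pos (mul_pos (hqZCpos ω) (hqDCpos ω)) (mul_pos (hqCpos ω) (hqZDCpos ω))
  -- the difference of the two sides is ∑ ω, P.p ω * logb 2 (t ω)
  have hdiff : P.condH Z (fun ω => (D ω, C ω)) - P.condH Z C
      = ∑ ω, P.p ω * Real.logb 2 (t ω) := by
    rw [condH_eq_sum hP, condH_eq_sum hP, ← Finset.sum_sub_distrib]
    refine Finset.sum_congr rfl fun ω _ => ?_
    have e1 : (P.prob fun ω' => Z ω' = Z ω ∧ (D ω', C ω') = (D ω, C ω))
        = qZDC (Z ω, D ω, C ω) := prob_congr fun ω' => by simp [Prod.ext_iff]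
    have e2 : (P.prob fun ω' => (D ω', C ω') = (D ω, C ω)) = qDC (D ω, C ω) :=
      prob_congr fun ω' => by simp [Prod.ext_iff]
    rw [e1, e2, htdef]
    rw [Real.logb_div (ne_of_gt (hqZDCpos ω)) (ne_of_gt (hqDCpos ω)),
      Real.logb_div (ne_of_gt (hqZCpos ω)) (ne_of_gt (hqCpos ω)),
      Real.logb_div (ne_of_gt (mul_pos (hqZCpos ω) (hqDCpos ω)))
        (ne_of_gt (mul_pos (hqCpos ω) (hqZDCpos ω))),
      Real.logb_mul (ne_of_gt (hqZCpos ω)) (ne_of_gt (hqDCpos ω)),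
      Real.logb_mul (ne_of_gt (hqCpos ω)) (ne_of_gt (hqZDCpos ω))]
    ring
  -- ∑ ω, P.p ω * t ω ≤ 1
  have hsum : ∑ ω, P.p ω * t ω ≤ 1 := by
    set t' : σ × υ × τ → ℝ :=
      fun r => qZC (r.1, r.2.2) * qDC r.2 / (qC r.2.2 * qZDC r) with ht'def
    have h0 : ∀ ω, t ω = t' (Z ω, D ω, C ω) := fun ω => by
      simp only [htdef, ht'def]
    have h1 : ∑ ω, P.p ω * t ω
        = ∑ r ∈ Finset.univ.image (fun ω => (Z ω, D ω, C ω)),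
            (P.prob fun ω' => (Z ω', D ω', C ω') = r) * t' r := by
      rw [Finset.sum_congr rfl fun ω _ => by rw [h0 ω]]
      exact (sum_image_prob (fun ω => Finset.mem_image_of_mem _ (Finset.mem_univ ω)) t').symm
    have h2 : ∀ r ∈ Finset.univ.image (fun ω => (Z ω, D ω, C ω)),
        (P.prob fun ω' => (Z ω', D ω', C ω') = r) * t' r
          = qZC (r.1, r.2.2) * qDC r.2 / qC r.2.2 := by
      intro r hr
      obtain ⟨ω₀, -, hω₀⟩ := Finset.mem_image.1 hr
      have e3 : (P.prob fun ω' => (Z ω', D ω', C ω') = r) = qZDC r :=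
        prob_congr fun ω' => by simp [Prod.ext_iff]
      have hpos : 0 < qZDC r := by rw [← hω₀]; exact hqZDCpos ω₀
      have hcpos : 0 < qC r.2.2 := by rw [← hω₀]; exact hqCpos ω₀
      rw [e3, ht'def]
      field_simp
    rw [h1, Finset.sum_congr rfl h2]
    have hsub : Finset.univ.image (fun ω => (Z ω, D ω, C ω))
        ⊆ (Finset.univ.image Z) ×ˢ ((Finset.univ.image D) ×ˢ (Finset.univ.image C)) := by
      intro r hr
      obtain ⟨ω₀, -, hω₀⟩ := Finset.mem_image.1 hr
      subst hω₀
      exact Finset.mem_product.2 ⟨Finset.mem_image_of_mem _ (Finset.mem_univ _),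
        Finset.mem_product.2 ⟨Finset.mem_image_of_mem _ (Finset.mem_univ _),
          Finset.mem_image_of_mem _ (Finset.mem_univ _)⟩⟩
    have hnn : ∀ r ∈ (Finset.univ.image Z) ×ˢ ((Finset.univ.image D) ×ˢ (Finset.univ.image C)),
        (0:ℝ) ≤ qZC (r.1, r.2.2) * qDC r.2 / qC r.2.2 := by
      intro r _
      exact div_nonneg (mul_nonneg (prob_nonneg' _) (prob_nonneg' _)) (prob_nonneg' _)
    refine le_trans (Finset.sum_le_sum_of_subset_of_nonneg hsub fun r hr _ => hnn r hr) ?_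
    rw [Finset.sum_product]
    have hrow : ∀ z, ∑ r ∈ (Finset.univ.image D) ×ˢ (Finset.univ.image C),
        qZC (z, r.2) * qDC r / qC r.2
        = ∑ cc ∈ Finset.univ.image C, qZC (z, cc) := by
      intro z
      rw [Finset.sum_product_right]
      refine Finset.sum_congr rfl fun cc hcc => ?_
      obtain ⟨ω₀, -, hω₀⟩ := Finset.mem_image.1 hcc
      have hcpos : 0 < qC cc := by rw [← hω₀]; exact prob_pos hP ω₀ rfl
      have : ∑ d ∈ Finset.univ.image D, qZC (z, cc) * qDC (d, cc) / qC cc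
          = qZC (z, cc) * (∑ d ∈ Finset.univ.image D, qDC (d, cc)) / qC cc := by
        rw [Finset.mul_sum, Finset.sum_div]
      rw [this]
      have hD : ∑ d ∈ Finset.univ.image D, qDC (d, cc) = qC cc := by
        simp only [hqDCdef, hqCdef]
        exact sum_image_prob_inter (fun ω => Finset.mem_image_of_mem _ (Finset.mem_univ ω)) _
      rw [hD]
      field_simp
    calc ∑ z ∈ Finset.univ.image Z, ∑ r ∈ (Finset.univ.image D) ×ˢ (Finset.univ.image C),
            qZC (z, r.2) * qDC r / qC r.2
        = ∑ z ∈ Finset.univ.image Z, ∑ cc ∈ Finset.univ.image C, qZC (z, cc) :=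
          Finset.sum_congr rfl fun z _ => hrow z
      _ = ∑ cc ∈ Finset.univ.image C, ∑ z ∈ Finset.univ.image Z, qZC (z, cc) :=
          Finset.sum_comm
      _ = ∑ cc ∈ Finset.univ.image C, qC cc := by
          refine Finset.sum_congr rfl fun cc _ => ?_
          simp only [hqZCdef, hqCdef]
          exact sum_image_prob_inter (fun ω => Finset.mem_image_of_mem _ (Finset.mem_univ ω)) _
      _ = 1 := by
          have h3 := sum_image_prob (P := P)
            (fun ω => Finset.mem_image_of_mem C (Finset.mem_univ ω)) (fun _ => (1:ℝ))
          simp only [hqCdef]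
          simpa [P.sum_one] using h3
      _ ≤ 1 := le_rfl
  -- conclude via log x ≤ x - 1
  have hlog : ∑ ω, P.p ω * Real.logb 2 (t ω) ≤ 0 := by
    have hstep : ∀ ω, P.p ω * Real.logb 2 (t ω) ≤ (P.p ω * t ω - P.p ω) / Real.log 2 := by
      intro ω
      have hlt : Real.log (t ω) ≤ t ω - 1 := Real.log_le_sub_one_of_pos (htpos ω)
      have hlog2 : (0:ℝ) < Real.log 2 := Real.log_pos one_lt_two
      rw [Real.logb, div_eq_mul_inv]
      rw [div_eq_mul_inv, ← mul_assoc]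
      have : P.p ω * Real.log (t ω) ≤ P.p ω * t ω - P.p ω := by
        nlinarith [hP ω]
      exact mul_le_mul_of_nonneg_right this (by positivity)
    calc ∑ ω, P.p ω * Real.logb 2 (t ω) ≤ ∑ ω, (P.p ω * t ω - P.p ω) / Real.log 2 :=
          Finset.sum_le_sum fun ω _ => hstep ω
      _ = ((∑ ω, P.p ω * t ω) - 1) / Real.log 2 := by
          rw [← Finset.sum_div, Finset.sum_sub_distrib, P.sum_one]
      _ ≤ 0 := by
          have hlog2 : (0:ℝ) < Real.log 2 := Real.log_pos one_lt_two
          apply div_nonpos_of_nonpos_of_nonneg <;> linarith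
  linarith

end FinProb

namespace FinProb

variable {Ω : Type} [Fintype Ω] {σ τ υ : Type} {P : FinProb Ω}

/-- Conditional subadditivity over a finite index set. -/
lemma condH_finset_le (hP : ∀ ω, 0 < P.p ω) {ι κ : Type} [DecidableEq ι]
    (V : ι → Ω → κ) (C : Ω → τ) (s : Finset ι) :
    P.condH (fun ω i => if i ∈ s then some (V i ω) else none) C
      ≤ ∑ i ∈ s, P.condH (V i) C := by
  induction s using Finset.induction_on with
  | empty =>
    rw [condH_eq_zero_of_determined (fun ω ω' _ => by simp)]
    simp
  | @insert a s ha ih =>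
    have e : P.condH (fun ω i => if i ∈ insert a s then some (V i ω) else none) C
        = P.condH (fun ω => (V a ω, fun i => if i ∈ s then some (V i ω) else none)) C := by
      refine condH_congr (fun _ _ => Iff.rfl) fun ω ω' => ?_
      simp only [Prod.mk.injEq]
      constructor
      · rintro ⟨h1, h2⟩
        refine ⟨⟨?_, ?_⟩, h2⟩
        · have h3 := congrFun h1 a
          simpa using h3
        · funext i
          by_cases hi : i ∈ s
          · have h3 := congrFun h1 i
            have hii : i ∈ insert a s := Finset.mem_insert_of_mem hi
            simpa [hi, hii] using h3
          · simp [hi]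
      · rintro ⟨⟨h1, h2⟩, h3⟩
        refine ⟨?_, h3⟩
        funext i
        by_cases hia : i = a
        · subst hia; simp [h1]
        · by_cases hi : i ∈ s
          · have h4 := congrFun h2 i
            simp only [hi, if_pos] at h4
            simp [Finset.mem_insert, hia, hi, h4]
          · simp [Finset.mem_insert, hia, hi]
    rw [e, condH_pair, Finset.sum_insert ha]
    have h4 := condH_pair_le hP (V a)
      (fun ω i => if i ∈ s then some (V i ω) else none) C
    linarith

end FinProb

lemma uniform_p_pos (Ω : Type) [Fintype Ω] [Nonempty Ω] :
    ∀ ω, 0 < (uniformProb Ω).p ω := fun _ => by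
  have h : (0:ℝ) < Fintype.card Ω := by exact_mod_cast Fintype.card_pos
  simpa [uniformProb] using inv_pos.2 h

lemma uniform_prob_eq_card {Ω : Type} [Fintype Ω] [Nonempty Ω] (E : Ω → Prop) :
    (uniformProb Ω).prob E = (Finset.univ.filter E).card / Fintype.card Ω := by
  unfold uniformProb FinProb.prob
  simp only [Finset.sum_ite, Finset.sum_const, Finset.sum_const_zero, add_zero,
    nsmul_eq_mul, div_eq_mul_inv]
  ring

/-- If every fiber of `C` has probability `d` times that of the corresponding fiber
of `(Z, C)`, then `H(Z | C) = log₂ d` under the uniform distribution. -/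
lemma condH_uniform_of_prob_ratio {Ω σ τ : Type} [Fintype Ω] [Nonempty Ω]
    {Z : Ω → σ} {C : Ω → τ} {d : ℝ} (hd : 0 < d)
    (h : ∀ ω, ((uniformProb Ω).prob fun ω' => C ω' = C ω)
        = d * ((uniformProb Ω).prob fun ω' => Z ω' = Z ω ∧ C ω' = C ω)) :
    (uniformProb Ω).condH Z C = Real.logb 2 d := by
  rw [FinProb.condH_eq_sum (uniform_p_pos Ω)]
  have hcard : ∀ ω, ((uniformProb Ω).prob fun ω' => Z ω' = Z ω ∧ C ω' = C ω)
      / ((uniformProb Ω).prob fun ω' => C ω' = C ω) = d⁻¹ := by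
    intro ω
    rw [h ω]
    have hZC : 0 < (uniformProb Ω).prob fun ω' => Z ω' = Z ω ∧ C ω' = C ω :=
      FinProb.prob_pos (uniform_p_pos Ω) ω ⟨rfl, rfl⟩
    field_simp
  calc ∑ ω, (uniformProb Ω).p ω * -Real.logb 2
        (((uniformProb Ω).prob fun ω' => Z ω' = Z ω ∧ C ω' = C ω)
          / ((uniformProb Ω).prob fun ω' => C ω' = C ω))
      = ∑ ω, (uniformProb Ω).p ω * Real.logb 2 d := by
        refine Finset.sum_congr rfl fun ω _ => ?_
        rw [hcard ω, Real.logb_inv]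
        ring
    _ = Real.logb 2 d := by
        rw [← Finset.sum_mul, (uniformProb Ω).sum_one, one_mul]

/-- Decomposition of conditional entropy for a variable of the form `ζ (θ F) W`
given `(g W, F)`, under the uniform distribution on a product. -/
lemma condH_prod_mix {Ωw Fty Qt σ τ : Type} [Fintype Ωw] [Nonempty Ωw]
    [Fintype Fty] [Nonempty Fty] [Fintype Qt]
    (θ : Fty → Qt) (ζ : Qt → Ωw → σ) (g : Ωw → τ) :
    (uniformProb (Ωw × Fty)).condH (fun ω => ζ (θ ω.2) ω.1) (fun ω => (g ω.1, ω.2))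
      = ∑ q : Qt, ((uniformProb (Ωw × Fty)).prob fun ω => θ ω.2 = q)
          * (uniformProb Ωw).condH (ζ q) g := by
  have hP1 := uniform_p_pos (Ωw × Fty)
  have hP2 := uniform_p_pos Ωw
  have hcF : (0:ℝ) < Fintype.card Fty := by exact_mod_cast Fintype.card_pos
  have hcW : (0:ℝ) < Fintype.card Ωw := by exact_mod_cast Fintype.card_pos
  have hinv : ((Fintype.card (Ωw × Fty) : ℕ):ℝ)⁻¹
      = ((Fintype.card Ωw : ℕ):ℝ)⁻¹ / ((Fintype.card Fty : ℕ):ℝ) := by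
    rw [Fintype.card_prod]
    push_cast
    rw [mul_inv, div_eq_mul_inv]
  have hprobC : ∀ (w : Ωw) (f : Fty),
      ((uniformProb (Ωw × Fty)).prob fun ω' => (g ω'.1, ω'.2) = (g w, f))
        = ((uniformProb Ωw).prob fun w' => g w' = g w) / (Fintype.card Fty) := by
    intro w f
    unfold uniformProb FinProb.prob
    dsimp only
    rw [Fintype.sum_prod_type, Finset.sum_div]
    refine Finset.sum_congr rfl fun w' _ => ?_
    by_cases hgw : g w' = g w
    · simp only [Prod.mk.injEq, hgw, true_and, if_true]
      rw [Finset.sum_ite_eq' Finset.univ f]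
      simp only [Finset.mem_univ, if_true]
      exact hinv
    · simp [Prod.mk.injEq, hgw]
  have hprobZC : ∀ (w : Ωw) (f : Fty),
      ((uniformProb (Ωw × Fty)).prob fun ω' =>
          ζ (θ ω'.2) ω'.1 = ζ (θ f) w ∧ (g ω'.1, ω'.2) = (g w, f))
        = ((uniformProb Ωw).prob fun w' => ζ (θ f) w' = ζ (θ f) w ∧ g w' = g w)
            / (Fintype.card Fty) := by
    intro w f
    unfold uniformProb FinProb.prob
    dsimp only
    rw [Fintype.sum_prod_type, Finset.sum_div]
    refine Finset.sum_congr rfl fun w' _ => ?_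
    have hcond : ∀ f', (ζ (θ f') w' = ζ (θ f) w ∧ (g w', f') = (g w, f))
        ↔ (f' = f ∧ (ζ (θ f) w' = ζ (θ f) w ∧ g w' = g w)) := by
      intro f'
      simp only [Prod.mk.injEq]
      constructor
      · rintro ⟨h1, h2, h3⟩
        subst h3
        exact ⟨rfl, h1, h2⟩
      · rintro ⟨h3, h1, h2⟩
        subst h3
        exact ⟨h1, h2, rfl⟩
    by_cases hX : ζ (θ f) w' = ζ (θ f) w ∧ g w' = g w
    · simp only [hcond]
      simp only [hX, and_true, if_true]
      rw [Finset.sum_ite_eq' Finset.univ f]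
      simp only [Finset.mem_univ, if_true]
      exact hinv
    · simp only [hcond]
      simp [hX]
  have hmain : (uniformProb (Ωw × Fty)).condH (fun ω => ζ (θ ω.2) ω.1)
        (fun ω => (g ω.1, ω.2))
      = ∑ f : Fty, ((Fintype.card Fty : ℝ))⁻¹ * (uniformProb Ωw).condH (ζ (θ f)) g := by
    rw [FinProb.condH_eq_sum hP1, Fintype.sum_prod_type, Finset.sum_comm]
    refine Finset.sum_congr rfl fun f _ => ?_
    rw [FinProb.condH_eq_sum hP2, Finset.mul_sum]
    refine Finset.sum_congr rfl fun w _ => ?_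
    dsimp only
    rw [hprobZC w f, hprobC w f]
    have hpwC : 0 < (uniformProb Ωw).prob fun w' => g w' = g w :=
      FinProb.prob_pos hP2 w rfl
    have e1 : (((uniformProb Ωw).prob fun w' => ζ (θ f) w' = ζ (θ f) w ∧ g w' = g w)
          / (Fintype.card Fty))
        / (((uniformProb Ωw).prob fun w' => g w' = g w) / (Fintype.card Fty))
        = ((uniformProb Ωw).prob fun w' => ζ (θ f) w' = ζ (θ f) w ∧ g w' = g w)
          / ((uniformProb Ωw).prob fun w' => g w' = g w) :=
      div_div_div_cancel_right₀ (ne_of_gt hcF) _ _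
    rw [e1]
    show ((Fintype.card (Ωw × Fty) : ℕ):ℝ)⁻¹ * _
      = (Fintype.card Fty : ℝ)⁻¹ * (((Fintype.card Ωw : ℕ):ℝ)⁻¹ * _)
    rw [hinv]
    ring
  rw [hmain]
  have hqprob : ∀ q : Qt, ((uniformProb (Ωw × Fty)).prob fun ω => θ ω.2 = q)
      = ∑ f' : Fty, (if θ f' = q then ((Fintype.card Fty : ℝ))⁻¹ else 0) := by
    intro q
    unfold uniformProb FinProb.prob
    dsimp only
    rw [Fintype.sum_prod_type, Finset.sum_comm]
    refine Finset.sum_congr rfl fun f' _ => ?_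
    by_cases hq : θ f' = q
    · simp only [hq, if_true, Finset.sum_const, Finset.card_univ, nsmul_eq_mul]
      rw [hinv]
      field_simp
    · simp [hq]
  calc ∑ f : Fty, ((Fintype.card Fty : ℝ))⁻¹ * (uniformProb Ωw).condH (ζ (θ f)) g
      = ∑ f : Fty, ∑ q : Qt, (if θ f = q then ((Fintype.card Fty : ℝ))⁻¹
          * (uniformProb Ωw).condH (ζ q) g else 0) := by
        refine Finset.sum_congr rfl fun f _ => ?_
        rw [Finset.sum_ite_eq Finset.univ (θ f)]
        simp
    _ = ∑ q : Qt, ∑ f : Fty, (if θ f = q then ((Fintype.card Fty : ℝ))⁻¹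
          * (uniformProb Ωw).condH (ζ q) g else 0) := Finset.sum_comm
    _ = ∑ q : Qt, ((uniformProb (Ωw × Fty)).prob fun ω => θ ω.2 = q)
          * (uniformProb Ωw).condH (ζ q) g := by
        refine Finset.sum_congr rfl fun q _ => ?_
        rw [hqprob q, Finset.sum_mul]
        refine Finset.sum_congr rfl fun f _ => ?_
        by_cases hq : θ f = q <;> simp [hq]

/-- Indicator with a fixed (classical) decidability instance. -/
noncomputable def ind (p : Prop) (x : ℝ) : ℝ := @ite ℝ p (Classical.propDecidable p) x 0

lemma ind_congr {p q : Prop} (h : p ↔ q) (x : ℝ) : ind p x = ind q x := by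
  unfold ind
  exact if_congr h rfl rfl

lemma ind_true {p : Prop} (h : p) (x : ℝ) : ind p x = x := by simp [ind, h]

lemma ind_false {p : Prop} (h : ¬p) (x : ℝ) : ind p x = 0 := by simp [ind, h]

lemma sum_ind_and {α : Type} [Fintype α] (b : α) (P : Prop) (x : ℝ) :
    ∑ a : α, ind (a = b ∧ P) x = ind P x := by
  by_cases hP : P
  · rw [ind_true hP]
    rw [Finset.sum_congr rfl fun a _ => ind_congr (and_iff_left hP) x]
    simp [ind]
  · rw [ind_false hP]
    rw [Finset.sum_congr rfl fun a _ => ind_false (fun hh => hP hh.2) x]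
    simp

set_option maxHeartbeats 2000000 in
/-- For N ≥ 2 and every database n and every k ∈ {1,…,K-1} (0-indexed: k+1 < K),
V_n^k ≥ ((N-2)/(N-1))·H(S_n | F, W_{1:k}) + (L log₂|X|)/(N-1) + V_n^{k+1}/(N-1). -/
theorem Vnk_recursion
{N K L : ℕ} {X Y F : Type} {Q S : Fin N → Type}
    [Fintype X] [Nonempty X] [Fintype Y] [Fintype F] [Nonempty F]
    [∀ n, Fintype (Q n)] [∀ n, Fintype (S n)]
    (c : PIRCode N K L X Y F Q S) (hN : 2 ≤ N) (n : Fin N) (k : Fin K) (hk : (k : ℕ) + 1 < K) :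
    c.Vnk n k
      ≥ (((N : ℝ) - 2) / ((N : ℝ) - 1))
            * (pirP K L X F).condH (c.Srv n) (fun ω => (ω.2, c.WleRv ((k : ℕ) + 1) ω))
        + (L * Real.logb 2 (Fintype.card X)) / ((N : ℝ) - 1)
        + c.Vnk n ⟨(k : ℕ) + 1, hk⟩ / ((N : ℝ) - 1) := by
  classical
  have hP : ∀ ω : PIRSamp K L X F, 0 < (pirP K L X F).p ω := uniform_p_pos _
  -- unfolding lemma for WleRv equality
  have hW : ∀ (m : ℕ) (ω ω' : PIRSamp K L X F),
      c.WleRv m ω = c.WleRv m ω' ↔ ∀ i : Fin K, (i:ℕ) < m → ω.1 i = ω'.1 i := by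
    intro m ω ω'
    constructor
    · intro h i hi
      have h2 := congrFun h i
      simp only [PIRCode.WleRv, if_pos hi, Option.some.injEq] at h2
      exact h2
    · intro h
      funext i
      simp only [PIRCode.WleRv]
      by_cases hi : (i:ℕ) < m
      · rw [if_pos hi, if_pos hi, h i hi]
      · rw [if_neg hi, if_neg hi]
  -- (1) chain rule at k
  have e1 : c.Vnk n k
      = (pirP K L X F).condH (c.Srv n)
          (fun ω : PIRSamp K L X F => (c.WleRv ((k:ℕ)+1) ω, ω.2))
        + (pirP K L X F).condH (c.AexcRv n k)
          (fun ω : PIRSamp K L X F => (c.Srv n ω, (c.WleRv ((k:ℕ)+1) ω, ω.2))) :=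
    FinProb.condH_pair (c.AexcRv n k) (c.Srv n) _
  -- (2)+(3) monotonicity + privacy, per database n' ≠ n
  have e2 : ∀ n' ∈ Finset.univ.erase n,
      (pirP K L X F).condH (c.Arv n' ⟨(k:ℕ)+1, hk⟩)
        (fun ω : PIRSamp K L X F => (c.Srv n ω, (c.WleRv ((k:ℕ)+1) ω, ω.2)))
      ≤ (pirP K L X F).condH (c.AexcRv n k)
        (fun ω : PIRSamp K L X F => (c.Srv n ω, (c.WleRv ((k:ℕ)+1) ω, ω.2))) := by
    intro n' hn'
    have hne : n' ≠ n := Finset.ne_of_mem_erase hn'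
    have h3 : (pirP K L X F).condH (c.Arv n' k)
        (fun ω : PIRSamp K L X F => (c.Srv n ω, (c.WleRv ((k:ℕ)+1) ω, ω.2)))
        ≤ (pirP K L X F).condH (c.AexcRv n k)
          (fun ω : PIRSamp K L X F => (c.Srv n ω, (c.WleRv ((k:ℕ)+1) ω, ω.2))) := by
      refine FinProb.condH_mono_of_determines hP ?_ _
      intro ω ω' hEq
      have h4 := congrFun hEq n'
      simp only [PIRCode.AexcRv, if_neg hne, Option.some.injEq] at h4
      exact h4
    have h5 : (pirP K L X F).condH (c.Arv n' k)
        (fun ω : PIRSamp K L X F => (c.Srv n ω, (c.WleRv ((k:ℕ)+1) ω, ω.2)))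
        = (pirP K L X F).condH (c.Arv n' ⟨(k:ℕ)+1, hk⟩)
          (fun ω : PIRSamp K L X F => (c.Srv n ω, (c.WleRv ((k:ℕ)+1) ω, ω.2))) := by
      have hcan : ∀ m : Fin K, (pirP K L X F).condH (c.Arv n' m)
          (fun ω : PIRSamp K L X F => (c.Srv n ω, (c.WleRv ((k:ℕ)+1) ω, ω.2)))
          = ∑ q : Q n', ((pirP K L X F).prob fun ω => c.query n' m ω.2 = q)
              * (uniformProb (Fin K → Fin L → X)).condH
                  (fun w => List.ofFn (c.answer n' q (c.store n' w)))
                  (fun w => (c.store n w,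
                    fun i : Fin K => if (i:ℕ) < (k:ℕ)+1 then some (w i) else none)) := by
        intro m
        have h1 : (pirP K L X F).condH (c.Arv n' m)
            (fun ω : PIRSamp K L X F => (c.Srv n ω, (c.WleRv ((k:ℕ)+1) ω, ω.2)))
            = (uniformProb ((Fin K → Fin L → X) × F)).condH
                (fun ω => (fun (q : Q n') (w : Fin K → Fin L → X) =>
                    List.ofFn (c.answer n' q (c.store n' w))) (c.query n' m ω.2) ω.1)
                (fun ω => ((fun w : Fin K → Fin L → X => (c.store n w,
                    fun i : Fin K => if (i:ℕ) < (k:ℕ)+1 then some (w i) else none)) ω.1,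
                  ω.2)) := by
          refine FinProb.condH_congr ?_ ?_
          · intro ω ω'
            simp only [PIRCode.Srv, PIRCode.WleRv, Prod.mk.injEq]
            tauto
          · intro ω ω'
            simp only [PIRCode.Arv, PIRCode.Srv, PIRCode.WleRv, Prod.mk.injEq]
            tauto
        rw [h1]
        exact condH_prod_mix (c.query n' m)
          (fun q w => List.ofFn (c.answer n' q (c.store n' w)))
          (fun w => (c.store n w,
            fun i : Fin K => if (i:ℕ) < (k:ℕ)+1 then some (w i) else none))
      rw [hcan k, hcan ⟨(k:ℕ)+1, hk⟩]
      exact Finset.sum_congr rfl fun q _ => by rw [c.privacy n' k ⟨(k:ℕ)+1, hk⟩ q]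
    rw [← h5]
    exact h3
  -- (4) subadditivity at k+1
  have e4 : (pirP K L X F).condH (c.AexcRv n ⟨(k:ℕ)+1, hk⟩)
      (fun ω : PIRSamp K L X F => (c.Srv n ω, (c.WleRv ((k:ℕ)+1) ω, ω.2)))
      ≤ ∑ n' ∈ Finset.univ.erase n, (pirP K L X F).condH (c.Arv n' ⟨(k:ℕ)+1, hk⟩)
          (fun ω : PIRSamp K L X F => (c.Srv n ω, (c.WleRv ((k:ℕ)+1) ω, ω.2))) := by
    have h6 := FinProb.condH_finset_le hP (fun n' => c.Arv n' ⟨(k:ℕ)+1, hk⟩)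
      (fun ω : PIRSamp K L X F => (c.Srv n ω, (c.WleRv ((k:ℕ)+1) ω, ω.2)))
      (Finset.univ.erase n)
    have h7 : (pirP K L X F).condH (c.AexcRv n ⟨(k:ℕ)+1, hk⟩)
        (fun ω : PIRSamp K L X F => (c.Srv n ω, (c.WleRv ((k:ℕ)+1) ω, ω.2)))
        = (pirP K L X F).condH
          (fun (ω : PIRSamp K L X F) (i : Fin N) =>
            if i ∈ Finset.univ.erase n then some (c.Arv i ⟨(k:ℕ)+1, hk⟩ ω) else none)
          (fun ω : PIRSamp K L X F => (c.Srv n ω, (c.WleRv ((k:ℕ)+1) ω, ω.2))) := by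
      refine FinProb.condH_congr' fun ω => ?_
      funext i
      by_cases hi : i = n
      · simp [PIRCode.AexcRv, hi]
      · simp [PIRCode.AexcRv, hi, Finset.mem_erase]
    rw [h7]
    exact h6
  -- (5) chain rule at k+1
  have e5 : (pirP K L X F).condH
      (fun ω : PIRSamp K L X F => (c.AexcRv n ⟨(k:ℕ)+1, hk⟩ ω, c.Srv n ω))
      (fun ω : PIRSamp K L X F => (c.WleRv ((k:ℕ)+1) ω, ω.2))
      = (pirP K L X F).condH (c.Srv n)
          (fun ω : PIRSamp K L X F => (c.WleRv ((k:ℕ)+1) ω, ω.2))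
        + (pirP K L X F).condH (c.AexcRv n ⟨(k:ℕ)+1, hk⟩)
          (fun ω : PIRSamp K L X F => (c.Srv n ω, (c.WleRv ((k:ℕ)+1) ω, ω.2))) :=
    FinProb.condH_pair (c.AexcRv n ⟨(k:ℕ)+1, hk⟩) (c.Srv n) _
  -- (6) correctness: W_{k+1} determined by the answers, S_n, and F
  have e6 : (pirP K L X F).condH (fun ω : PIRSamp K L X F => ω.1 ⟨(k:ℕ)+1, hk⟩)
      (fun ω : PIRSamp K L X F =>
        ((c.AexcRv n ⟨(k:ℕ)+1, hk⟩ ω, c.Srv n ω), (c.WleRv ((k:ℕ)+1) ω, ω.2))) = 0 := by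
    refine FinProb.condH_eq_zero_of_determined ?_
    intro ω ω' hEq
    simp only [Prod.mk.injEq] at hEq
    obtain ⟨⟨hA, hS⟩, _, hF⟩ := hEq
    refine c.correct ⟨(k:ℕ)+1, hk⟩ ω ω' hF ?_
    intro n''
    by_cases hnn : n'' = n
    · subst hnn
      have hS' : c.store n'' ω.1 = c.store n'' ω'.1 := hS
      rw [hF, hS']
    · have h8 := congrFun hA n''
      simp only [PIRCode.AexcRv, if_neg hnn, Option.some.injEq] at h8
      exact h8
  -- (7) two chain rules and a swap
  have e7a : (pirP K L X F).condH
      (fun ω : PIRSamp K L X F =>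
        (ω.1 ⟨(k:ℕ)+1, hk⟩, (c.AexcRv n ⟨(k:ℕ)+1, hk⟩ ω, c.Srv n ω)))
      (fun ω : PIRSamp K L X F => (c.WleRv ((k:ℕ)+1) ω, ω.2))
      = (pirP K L X F).condH
          (fun ω : PIRSamp K L X F => (c.AexcRv n ⟨(k:ℕ)+1, hk⟩ ω, c.Srv n ω))
          (fun ω : PIRSamp K L X F => (c.WleRv ((k:ℕ)+1) ω, ω.2))
        + (pirP K L X F).condH (fun ω : PIRSamp K L X F => ω.1 ⟨(k:ℕ)+1, hk⟩)
          (fun ω : PIRSamp K L X F =>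
            ((c.AexcRv n ⟨(k:ℕ)+1, hk⟩ ω, c.Srv n ω), (c.WleRv ((k:ℕ)+1) ω, ω.2))) :=
    FinProb.condH_pair _ _ _
  have e7b : (pirP K L X F).condH
      (fun ω : PIRSamp K L X F =>
        ((c.AexcRv n ⟨(k:ℕ)+1, hk⟩ ω, c.Srv n ω), ω.1 ⟨(k:ℕ)+1, hk⟩))
      (fun ω : PIRSamp K L X F => (c.WleRv ((k:ℕ)+1) ω, ω.2))
      = (pirP K L X F).condH (fun ω : PIRSamp K L X F => ω.1 ⟨(k:ℕ)+1, hk⟩)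
          (fun ω : PIRSamp K L X F => (c.WleRv ((k:ℕ)+1) ω, ω.2))
        + (pirP K L X F).condH
          (fun ω : PIRSamp K L X F => (c.AexcRv n ⟨(k:ℕ)+1, hk⟩ ω, c.Srv n ω))
          (fun ω : PIRSamp K L X F =>
            (ω.1 ⟨(k:ℕ)+1, hk⟩, (c.WleRv ((k:ℕ)+1) ω, ω.2))) :=
    FinProb.condH_pair _ _ _
  have e7c : (pirP K L X F).condH
      (fun ω : PIRSamp K L X F =>
        (ω.1 ⟨(k:ℕ)+1, hk⟩, (c.AexcRv n ⟨(k:ℕ)+1, hk⟩ ω, c.Srv n ω)))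
      (fun ω : PIRSamp K L X F => (c.WleRv ((k:ℕ)+1) ω, ω.2))
      = (pirP K L X F).condH
          (fun ω : PIRSamp K L X F =>
            ((c.AexcRv n ⟨(k:ℕ)+1, hk⟩ ω, c.Srv n ω), ω.1 ⟨(k:ℕ)+1, hk⟩))
          (fun ω : PIRSamp K L X F => (c.WleRv ((k:ℕ)+1) ω, ω.2)) := by
    refine FinProb.condH_congr (fun _ _ => Iff.rfl) ?_
    intro ω ω'
    simp only [Prod.mk.injEq]
    tauto
  -- (8) fresh uniform coordinate: H(W_{k+1} | W_{1:k}, F) = L log|X|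
  have e8 : (pirP K L X F).condH (fun ω : PIRSamp K L X F => ω.1 ⟨(k:ℕ)+1, hk⟩)
      (fun ω : PIRSamp K L X F => (c.WleRv ((k:ℕ)+1) ω, ω.2))
      = (L:ℝ) * Real.logb 2 (Fintype.card X) := by
    have hX0 : (0:ℝ) < (Fintype.card X : ℝ) := by
      have := Fintype.card_pos (α := X)
      exact_mod_cast this
    have hd : (0:ℝ) < ((Fintype.card X : ℝ))^L := by positivity
    have hcardfun : ((Fintype.card (Fin L → X) : ℕ) : ℝ) = ((Fintype.card X : ℝ))^L := by
      rw [Fintype.card_fun, Fintype.card_fin]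
      push_cast
      ring
    have hupdateC : ∀ (v : Fin L → X) (ω' : PIRSamp K L X F),
        c.WleRv ((k:ℕ)+1) ((Function.update ω'.1 ⟨(k:ℕ)+1, hk⟩ v, ω'.2) : PIRSamp K L X F)
          = c.WleRv ((k:ℕ)+1) ω' := by
      intro v ω'
      funext i
      simp only [PIRCode.WleRv]
      by_cases hi : (i:ℕ) < (k:ℕ)+1
      · rw [if_pos hi, if_pos hi]
        have hij : i ≠ ⟨(k:ℕ)+1, hk⟩ := by
          intro hij
          have hval : (i:ℕ) = (k:ℕ)+1 := congrArg Fin.val hij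
          omega
        rw [Function.update_of_ne hij]
      · rw [if_neg hi, if_neg hi]
    have hratio : ∀ ω : PIRSamp K L X F,
        ((uniformProb (PIRSamp K L X F)).prob fun ω' =>
            (c.WleRv ((k:ℕ)+1) ω', ω'.2) = (c.WleRv ((k:ℕ)+1) ω, ω.2))
          = ((Fintype.card X : ℝ))^L * ((uniformProb (PIRSamp K L X F)).prob fun ω' =>
              ω'.1 ⟨(k:ℕ)+1, hk⟩ = ω.1 ⟨(k:ℕ)+1, hk⟩
                ∧ (c.WleRv ((k:ℕ)+1) ω', ω'.2) = (c.WleRv ((k:ℕ)+1) ω, ω.2)) := by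
      intro ω
      rw [← hcardfun]
      have hprob : ∀ E : PIRSamp K L X F → Prop, (uniformProb (PIRSamp K L X F)).prob E
          = ∑ ω' : PIRSamp K L X F,
              ind (E ω') ((Fintype.card (PIRSamp K L X F) : ℕ):ℝ)⁻¹ :=
        fun E => rfl
      have hinv : Function.Involutive (fun p : (Fin L → X) × PIRSamp K L X F =>
          ((p.2.1 ⟨(k:ℕ)+1, hk⟩,
            ((Function.update p.2.1 ⟨(k:ℕ)+1, hk⟩ p.1, p.2.2) : PIRSamp K L X F)))) := by
        intro p
        simp only [Function.update_self, Function.update_idem, Function.update_eq_self]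
      calc ((uniformProb (PIRSamp K L X F)).prob fun ω' =>
            (c.WleRv ((k:ℕ)+1) ω', ω'.2) = (c.WleRv ((k:ℕ)+1) ω, ω.2))
          = ∑ ω' : PIRSamp K L X F,
              ind ((c.WleRv ((k:ℕ)+1) ω', ω'.2) = (c.WleRv ((k:ℕ)+1) ω, ω.2))
                ((Fintype.card (PIRSamp K L X F) : ℕ):ℝ)⁻¹ := hprob _
        _ = ∑ ω' : PIRSamp K L X F, ∑ v : Fin L → X,
              ind (v = ω.1 ⟨(k:ℕ)+1, hk⟩
                  ∧ (c.WleRv ((k:ℕ)+1) ω', ω'.2) = (c.WleRv ((k:ℕ)+1) ω, ω.2))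
                ((Fintype.card (PIRSamp K L X F) : ℕ):ℝ)⁻¹ :=
            Finset.sum_congr rfl fun ω' _ => (sum_ind_and _ _ _).symm
        _ = ∑ v : Fin L → X, ∑ ω' : PIRSamp K L X F,
              ind (v = ω.1 ⟨(k:ℕ)+1, hk⟩
                  ∧ (c.WleRv ((k:ℕ)+1) ω', ω'.2) = (c.WleRv ((k:ℕ)+1) ω, ω.2))
                ((Fintype.card (PIRSamp K L X F) : ℕ):ℝ)⁻¹ := Finset.sum_comm
        _ = ∑ p : (Fin L → X) × PIRSamp K L X F,
              ind (p.1 = ω.1 ⟨(k:ℕ)+1, hk⟩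
                  ∧ (c.WleRv ((k:ℕ)+1) p.2, p.2.2) = (c.WleRv ((k:ℕ)+1) ω, ω.2))
                ((Fintype.card (PIRSamp K L X F) : ℕ):ℝ)⁻¹ :=
            (Fintype.sum_prod_type (f := fun p : (Fin L → X) × PIRSamp K L X F =>
              ind (p.1 = ω.1 ⟨(k:ℕ)+1, hk⟩
                  ∧ (c.WleRv ((k:ℕ)+1) p.2, p.2.2) = (c.WleRv ((k:ℕ)+1) ω, ω.2))
                ((Fintype.card (PIRSamp K L X F) : ℕ):ℝ)⁻¹)).symm
        _ = ∑ p : (Fin L → X) × PIRSamp K L X F,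
              ind (((Function.update p.2.1 ⟨(k:ℕ)+1, hk⟩ p.1, p.2.2)
                      : PIRSamp K L X F).1 ⟨(k:ℕ)+1, hk⟩ = ω.1 ⟨(k:ℕ)+1, hk⟩
                  ∧ (c.WleRv ((k:ℕ)+1)
                      ((Function.update p.2.1 ⟨(k:ℕ)+1, hk⟩ p.1, p.2.2) : PIRSamp K L X F),
                    ((Function.update p.2.1 ⟨(k:ℕ)+1, hk⟩ p.1, p.2.2)
                      : PIRSamp K L X F).2) = (c.WleRv ((k:ℕ)+1) ω, ω.2))
                ((Fintype.card (PIRSamp K L X F) : ℕ):ℝ)⁻¹ := by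
            refine Finset.sum_congr rfl fun p _ => ind_congr ?_ _
            rw [hupdateC p.1 p.2]
            simp only [Function.update_self]
        _ = ∑ p : (Fin L → X) × PIRSamp K L X F,
              ind (p.2.1 ⟨(k:ℕ)+1, hk⟩ = ω.1 ⟨(k:ℕ)+1, hk⟩
                  ∧ (c.WleRv ((k:ℕ)+1) p.2, p.2.2) = (c.WleRv ((k:ℕ)+1) ω, ω.2))
                ((Fintype.card (PIRSamp K L X F) : ℕ):ℝ)⁻¹ :=
            Equiv.sum_comp (Function.Involutive.toPerm _ hinv)
              (fun p : (Fin L → X) × PIRSamp K L X F =>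
                ind (p.2.1 ⟨(k:ℕ)+1, hk⟩ = ω.1 ⟨(k:ℕ)+1, hk⟩
                  ∧ (c.WleRv ((k:ℕ)+1) p.2, p.2.2) = (c.WleRv ((k:ℕ)+1) ω, ω.2))
                ((Fintype.card (PIRSamp K L X F) : ℕ):ℝ)⁻¹)
        _ = ((Fintype.card (Fin L → X) : ℕ) : ℝ) * ∑ ω' : PIRSamp K L X F,
              ind (ω'.1 ⟨(k:ℕ)+1, hk⟩ = ω.1 ⟨(k:ℕ)+1, hk⟩
                  ∧ (c.WleRv ((k:ℕ)+1) ω', ω'.2) = (c.WleRv ((k:ℕ)+1) ω, ω.2))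
                ((Fintype.card (PIRSamp K L X F) : ℕ):ℝ)⁻¹ := by
            rw [Fintype.sum_prod_type (f := fun p : (Fin L → X) × PIRSamp K L X F =>
              ind (p.2.1 ⟨(k:ℕ)+1, hk⟩ = ω.1 ⟨(k:ℕ)+1, hk⟩
                  ∧ (c.WleRv ((k:ℕ)+1) p.2, p.2.2) = (c.WleRv ((k:ℕ)+1) ω, ω.2))
                ((Fintype.card (PIRSamp K L X F) : ℕ):ℝ)⁻¹)]
            dsimp only
            rw [Finset.sum_const, Finset.card_univ, nsmul_eq_mul]
        _ = ((Fintype.card (Fin L → X) : ℕ) : ℝ)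
              * ((uniformProb (PIRSamp K L X F)).prob fun ω' =>
                ω'.1 ⟨(k:ℕ)+1, hk⟩ = ω.1 ⟨(k:ℕ)+1, hk⟩
                  ∧ (c.WleRv ((k:ℕ)+1) ω', ω'.2) = (c.WleRv ((k:ℕ)+1) ω, ω.2)) :=
            congrArg _ (hprob _).symm
    have hres := condH_uniform_of_prob_ratio hd hratio
    rw [show ((pirP K L X F).condH (fun ω : PIRSamp K L X F => ω.1 ⟨(k:ℕ)+1, hk⟩)
        (fun ω : PIRSamp K L X F => (c.WleRv ((k:ℕ)+1) ω, ω.2)))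
      = ((uniformProb (PIRSamp K L X F)).condH (fun ω : PIRSamp K L X F => ω.1 ⟨(k:ℕ)+1, hk⟩)
        (fun ω : PIRSamp K L X F => (c.WleRv ((k:ℕ)+1) ω, ω.2))) from rfl, hres,
      Real.logb_pow]
  -- (9) relabeling of the conditioning at k+1
  have hsplit : ∀ ω ω' : PIRSamp K L X F,
      c.WleRv ((k:ℕ)+1+1) ω = c.WleRv ((k:ℕ)+1+1) ω'
        ↔ (ω.1 ⟨(k:ℕ)+1, hk⟩ = ω'.1 ⟨(k:ℕ)+1, hk⟩
            ∧ c.WleRv ((k:ℕ)+1) ω = c.WleRv ((k:ℕ)+1) ω') := by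
    intro ω ω'
    rw [hW ((k:ℕ)+1+1) ω ω', hW ((k:ℕ)+1) ω ω']
    constructor
    · intro h
      exact ⟨h ⟨(k:ℕ)+1, hk⟩ (Nat.lt_succ_self _), fun i hi => h i (by omega)⟩
    · rintro ⟨h1, h2⟩ i hi
      by_cases hik : (i:ℕ) < (k:ℕ)+1
      · exact h2 i hik
      · have hval : (i:ℕ) = (k:ℕ)+1 := by omega
        have hij : i = ⟨(k:ℕ)+1, hk⟩ := Fin.ext hval
        rw [hij]
        exact h1
  have e9 : (pirP K L X F).condH
      (fun ω : PIRSamp K L X F => (c.AexcRv n ⟨(k:ℕ)+1, hk⟩ ω, c.Srv n ω))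
      (fun ω : PIRSamp K L X F => (ω.1 ⟨(k:ℕ)+1, hk⟩, (c.WleRv ((k:ℕ)+1) ω, ω.2)))
      = c.Vnk n ⟨(k:ℕ)+1, hk⟩ := by
    have hC : ∀ ω ω' : PIRSamp K L X F,
        ((ω.1 ⟨(k:ℕ)+1, hk⟩, (c.WleRv ((k:ℕ)+1) ω, ω.2))
            = (ω'.1 ⟨(k:ℕ)+1, hk⟩, (c.WleRv ((k:ℕ)+1) ω', ω'.2)))
          ↔ ((c.WleRv ((k:ℕ)+1+1) ω, ω.2) = (c.WleRv ((k:ℕ)+1+1) ω', ω'.2)) := by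
      intro ω ω'
      simp only [Prod.mk.injEq]
      constructor
      · rintro ⟨h1, h2, h3⟩
        exact ⟨(hsplit ω ω').2 ⟨h1, h2⟩, h3⟩
      · rintro ⟨h1, h2⟩
        obtain ⟨h3, h4⟩ := (hsplit ω ω').1 h1
        exact ⟨h3, h4, h2⟩
    exact FinProb.condH_congr hC (fun ω ω' => and_congr Iff.rfl (hC ω ω'))
  -- (10) swapping the pair in the statement's conditioning
  have e10 : (pirP K L X F).condH (c.Srv n)
      (fun ω : PIRSamp K L X F => (c.WleRv ((k:ℕ)+1) ω, ω.2))
      = (pirP K L X F).condH (c.Srv n)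
        (fun ω : PIRSamp K L X F => (ω.2, c.WleRv ((k:ℕ)+1) ω)) := by
    refine FinProb.condH_congr ?_ ?_ <;> intro ω ω' <;> simp only [Prod.mk.injEq] <;> tauto
  -- (11) summation bound
  have e11 : ∑ n' ∈ Finset.univ.erase n, (pirP K L X F).condH (c.Arv n' ⟨(k:ℕ)+1, hk⟩)
      (fun ω : PIRSamp K L X F => (c.Srv n ω, (c.WleRv ((k:ℕ)+1) ω, ω.2)))
      ≤ ((N:ℝ) - 1) * (pirP K L X F).condH (c.AexcRv n k)
        (fun ω : PIRSamp K L X F => (c.Srv n ω, (c.WleRv ((k:ℕ)+1) ω, ω.2))) := by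
    have h9 := Finset.sum_le_card_nsmul (Finset.univ.erase n)
      (fun n' => (pirP K L X F).condH (c.Arv n' ⟨(k:ℕ)+1, hk⟩)
        (fun ω : PIRSamp K L X F => (c.Srv n ω, (c.WleRv ((k:ℕ)+1) ω, ω.2))))
      ((pirP K L X F).condH (c.AexcRv n k)
        (fun ω : PIRSamp K L X F => (c.Srv n ω, (c.WleRv ((k:ℕ)+1) ω, ω.2)))) e2
    rw [Finset.card_erase_of_mem (Finset.mem_univ n), Finset.card_univ, Fintype.card_fin,
      nsmul_eq_mul] at h9
    have h10 : ((N - 1 : ℕ) : ℝ) = (N:ℝ) - 1 := by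
      have h1N : 1 ≤ N := by omega
      push_cast [h1N]
      ring
    rw [h10] at h9
    exact h9
  -- final assembly
  have hx : (0:ℝ) < (N:ℝ) - 1 := by
    have h2N : (2:ℝ) ≤ (N:ℝ) := by exact_mod_cast hN
    linarith
  have e13 : (pirP K L X F).condH
      (fun ω : PIRSamp K L X F => (c.AexcRv n ⟨(k:ℕ)+1, hk⟩ ω, c.Srv n ω))
      (fun ω : PIRSamp K L X F => (c.WleRv ((k:ℕ)+1) ω, ω.2))
      = (L:ℝ) * Real.logb 2 (Fintype.card X) + c.Vnk n ⟨(k:ℕ)+1, hk⟩ := by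
    have h11 := e7a
    rw [e6, add_zero, e7c, e7b, e8, e9] at h11
    linarith [h11]
  have key : (pirP K L X F).condH (c.AexcRv n ⟨(k:ℕ)+1, hk⟩)
      (fun ω : PIRSamp K L X F => (c.Srv n ω, (c.WleRv ((k:ℕ)+1) ω, ω.2)))
      ≤ ((N:ℝ) - 1) * (pirP K L X F).condH (c.AexcRv n k)
        (fun ω : PIRSamp K L X F => (c.Srv n ω, (c.WleRv ((k:ℕ)+1) ω, ω.2))) :=
    le_trans e4 e11
  rw [ge_iff_le, ← e10, e1]
  rw [div_mul_eq_mul_div, ← add_div, ← add_div, div_le_iff₀ hx]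
  have hE' : (pirP K L X F).condH (c.AexcRv n ⟨(k:ℕ)+1, hk⟩)
      (fun ω : PIRSamp K L X F => (c.Srv n ω, (c.WleRv ((k:ℕ)+1) ω, ω.2)))
      = (L:ℝ) * Real.logb 2 (Fintype.card X) + c.Vnk n ⟨(k:ℕ)+1, hk⟩
        - (pirP K L X F).condH (c.Srv n)
          (fun ω : PIRSamp K L X F => (c.WleRv ((k:ℕ)+1) ω, ω.2)) := by
    linarith [e5, e13]
  nlinarith [key, hE', hx,
    FinProb.condH_nonneg hP (c.AexcRv n k)
      (fun ω : PIRSamp K L X F => (c.Srv n ω, (c.WleRv ((k:ℕ)+1) ω, ω.2)))]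
end
end

section
/- For any N-database K-message private information retrieval code, any n ∈ {1,...,N}, and any k ∈ {1,...,K-1}, the conditional entropies satisfy H(S_{1:n-1,n+1:N}, A_n^[k] | W_1,...,W_k, F) = H(S_{1:n-1,n+1:N}, A_n^[k+1] | W_1,...,W_k, F), where S_{1:n-1,n+1:N} denotes the stored contents of all databases other than database n. -/
open scoped Classical
open Real

noncomputable section

-- helpers

lemma prob_uniform {Ω : Type} [Fintype Ω] [Nonempty Ω] (E : Ω → Prop) :
    (uniformProb Ω).prob E
      = ((Finset.univ.filter E).card : ℝ) / (Fintype.card Ω : ℝ) := by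
  classical
  unfold FinProb.prob uniformProb
  rw [← Finset.sum_filter, Finset.sum_const, nsmul_eq_mul, div_eq_mul_inv]

lemma prob_congr {Ω : Type} [Fintype Ω] (P : FinProb Ω) (E E' : Ω → Prop)
    (h : ∀ ω, E ω ↔ E' ω) : P.prob E = P.prob E' := by
  unfold FinProb.prob
  exact Finset.sum_congr rfl fun ω _ => by rw [eq_iff_iff.2 (h ω)]

lemma prob_eq_zero_of_not_mem_image {Ω σ : Type} [Fintype Ω] (P : FinProb Ω)
    (Z : Ω → σ) (z : σ) (hz : z ∉ Finset.univ.image Z) :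
    (P.prob fun ω => Z ω = z) = 0 := by
  unfold FinProb.prob
  refine Finset.sum_eq_zero fun ω _ => ?_
  rw [if_neg]
  intro h
  exact hz (Finset.mem_image.2 ⟨ω, Finset.mem_univ _, h⟩)

lemma entH_eq_sum_subset {Ω σ : Type} [Fintype Ω] (P : FinProb Ω)
    (Z : Ω → σ) (T : Finset σ) (hT : Finset.univ.image Z ⊆ T) :
    P.entH Z = ∑ z ∈ T,
      -(P.prob fun ω => Z ω = z) * Real.logb 2 (P.prob fun ω => Z ω = z) := by
  unfold FinProb.entH
  refine Finset.sum_subset hT fun z _ hz => ?_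
  rw [prob_eq_zero_of_not_mem_image P Z z hz]
  simp

lemma entH_comp_injective {Ω σ τ : Type} [Fintype Ω] (P : FinProb Ω)
    (Z : Ω → σ) (e : σ → τ) (he : Function.Injective e) :
    P.entH (fun ω => e (Z ω)) = P.entH Z := by
  classical
  unfold FinProb.entH
  rw [show (Finset.univ.image fun ω => e (Z ω)) = (Finset.univ.image Z).image e from by
    rw [Finset.image_image]; rfl]
  rw [Finset.sum_image (fun a _ b _ h => he h)]
  refine Finset.sum_congr rfl fun z _ => ?_
  rw [prob_congr P (fun ω => e (Z ω) = e z) (fun ω => Z ω = z) (fun ω => he.eq_iff)]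

lemma card_filter_snd {Wt F' : Type} [Fintype Wt] [Fintype F'] (Pr : F' → Prop) :
    (Finset.univ.filter fun ω : Wt × F' => Pr ω.2).card
      = Fintype.card Wt * (Finset.univ.filter Pr).card := by
  classical
  rw [show (Finset.univ.filter fun ω : Wt × F' => Pr ω.2)
      = (Finset.univ : Finset Wt) ×ˢ (Finset.univ.filter Pr) from by
    ext ω; simp [Finset.mem_product]]
  rw [Finset.card_product, Finset.card_univ]

lemma card_filter_pair {Wt F' τ : Type} [Fintype Wt] [Fintype F']
    (R : Wt → τ) (f : F') (t : τ) :
    (Finset.univ.filter fun ω : Wt × F' => ω.2 = f ∧ R ω.1 = t).card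
      = (Finset.univ.filter fun w : Wt => R w = t).card := by
  classical
  refine Finset.card_bij (fun ω _ => ω.1) ?_ ?_ ?_
  · intro ω hω
    simp only [Finset.mem_filter, Finset.mem_univ, true_and] at hω ⊢
    exact hω.2
  · intro a ha b hb h
    simp only [Finset.mem_filter, Finset.mem_univ, true_and] at ha hb
    exact Prod.ext h (ha.1.trans hb.1.symm)
  · intro w hw
    simp only [Finset.mem_filter, Finset.mem_univ, true_and] at hw
    exact ⟨(w, f), by simp [hw], rfl⟩

/-- Key family lemma: if two query maps have identical fiber sizes, then the
joint entropies of `(F, R (g F) W)` agree. -/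
lemma entH_query_family {Wt F' Qt τ : Type} [Fintype Wt] [Nonempty Wt]
    [Fintype F'] [Nonempty F'] [Fintype Qt]
    (R : Qt → Wt → τ) (g g' : F' → Qt)
    (hgg : ∀ q, (Finset.univ.filter fun f => g f = q).card
              = (Finset.univ.filter fun f => g' f = q).card) :
    (uniformProb (Wt × F')).entH (fun ω => (ω.2, R (g ω.2) ω.1))
      = (uniformProb (Wt × F')).entH (fun ω => (ω.2, R (g' ω.2) ω.1)) := by
  classical
  set T : Finset τ := Finset.univ.biUnion (fun q : Qt => Finset.univ.image (R q)) with hT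
  have hprob : ∀ (h : F' → Qt) (f : F') (t : τ),
      ((uniformProb (Wt × F')).prob fun ω => (ω.2, R (h ω.2) ω.1) = (f, t))
        = ((Finset.univ.filter fun w : Wt => R (h f) w = t).card : ℝ)
            / (Fintype.card (Wt × F') : ℝ) := by
    intro h f t
    rw [prob_uniform]
    congr 2
    rw [← card_filter_pair (fun w => R (h f) w) f t]
    congr 1
    ext ω
    simp only [Finset.mem_filter, Finset.mem_univ, true_and, Prod.mk.injEq]
    constructor
    · rintro ⟨rfl, h2⟩; exact ⟨rfl, h2⟩
    · rintro ⟨rfl, h2⟩; exact ⟨rfl, h2⟩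
  set G : Qt → ℝ := fun q => ∑ t ∈ T,
      -(((Finset.univ.filter fun w : Wt => R q w = t).card : ℝ)
          / (Fintype.card (Wt × F') : ℝ))
        * Real.logb 2 (((Finset.univ.filter fun w : Wt => R q w = t).card : ℝ)
          / (Fintype.card (Wt × F') : ℝ)) with hG
  have key : ∀ (h : F' → Qt),
      (uniformProb (Wt × F')).entH (fun ω => (ω.2, R (h ω.2) ω.1))
        = ∑ q : Qt, ((Finset.univ.filter fun f => h f = q).card : ℝ) * G q := by
    intro h
    rw [entH_eq_sum_subset _ _ ((Finset.univ : Finset F') ×ˢ T) (by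
      intro z hz
      simp only [Finset.mem_image, Finset.mem_univ, true_and] at hz
      obtain ⟨ω, rfl⟩ := hz
      simp only [hT, Finset.mem_product, Finset.mem_biUnion, Finset.mem_image,
        Finset.mem_univ, true_and]
      exact ⟨h ω.2, ω.1, rfl⟩), Finset.sum_product]
    have : ∀ f : F', (∑ t ∈ T,
        -((uniformProb (Wt × F')).prob fun ω => (ω.2, R (h ω.2) ω.1) = (f, t))
          * Real.logb 2 ((uniformProb (Wt × F')).prob fun ω => (ω.2, R (h ω.2) ω.1) = (f, t)))
        = G (h f) := by
      intro f
      rw [hG]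
      exact Finset.sum_congr rfl fun t _ => by rw [hprob h f t]
    rw [Finset.sum_congr rfl fun f _ => this f]
    rw [← Finset.sum_fiberwise (Finset.univ : Finset F') h (fun f => G (h f))]
    refine Finset.sum_congr rfl fun q _ => ?_
    rw [Finset.sum_congr rfl (fun f hf => by
      rw [(Finset.mem_filter.1 hf).2]), Finset.sum_const, nsmul_eq_mul]
  rw [key g, key g']
  exact Finset.sum_congr rfl fun q _ => by rw [hgg q]

/-- The key privacy step: H(S_{1:n-1,n+1:N}, A_n^{[k]} | W_{1:k}, F)
= H(S_{1:n-1,n+1:N}, A_n^{[k+1]} | W_{1:k}, F), for every n and every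
k ∈ {1,…,K-1} (0-indexed: k+1 < K). -/
theorem answer_swap_entropy_eq
{N K L : ℕ} {X Y F : Type} {Q S : Fin N → Type}
    [Fintype X] [Nonempty X] [Fintype Y] [Fintype F] [Nonempty F]
    [∀ n, Fintype (Q n)] [∀ n, Fintype (S n)]
    (c : PIRCode N K L X Y F Q S) (n : Fin N) (k : Fin K) (hk : (k : ℕ) + 1 < K) :
    (pirP K L X F).condH (fun ω => (c.SexcRv n ω, c.Arv n k ω))
        (fun ω => (c.WleRv ((k : ℕ) + 1) ω, ω.2))
      = (pirP K L X F).condH (fun ω => (c.SexcRv n ω, c.Arv n ⟨(k : ℕ) + 1, hk⟩ ω))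
        (fun ω => (c.WleRv ((k : ℕ) + 1) ω, ω.2)) := by
  classical
  set k' : Fin K := ⟨(k : ℕ) + 1, hk⟩ with hk'
  set Wt := (Fin K → Fin L → X) with hWt
  set α := (((n' : Fin N) → Option (S n')) × List Y) with hα
  set β := (Fin K → Option (Fin L → X)) with hβ
  set R : Q n → Wt → α × β := fun q w =>
    (((fun n' => if n' = n then none else some (c.store n' w)),
      List.ofFn (c.answer n q (c.store n w))),
      fun i => if (i : ℕ) < (k : ℕ) + 1 then some (w i) else none) with hR
  set e : F × (α × β) → α × (β × F) := fun x => (x.2.1, (x.2.2, x.1)) with he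
  have heinj : Function.Injective e := by
    rintro ⟨f, a, b⟩ ⟨f', a', b'⟩ h
    simp only [he, Prod.mk.injEq] at h
    simp [h.1, h.2.1, h.2.2]
  have hfib : ∀ q : Q n, (Finset.univ.filter fun f : F => c.query n k f = q).card
      = (Finset.univ.filter fun f : F => c.query n k' f = q).card := by
    intro q
    have hp := c.privacy n k k' q
    unfold pirP at hp
    rw [prob_uniform, prob_uniform,
      card_filter_snd (Wt := Wt) (fun f => c.query n k f = q),
      card_filter_snd (Wt := Wt) (fun f => c.query n k' f = q)] at hp
    have hΩ : (0 : ℝ) < (Fintype.card (PIRSamp K L X F) : ℝ) := by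
      exact_mod_cast Fintype.card_pos
    have hWtpos : 0 < Fintype.card Wt := Fintype.card_pos
    have := (div_left_inj' (ne_of_gt hΩ)).mp (by exact_mod_cast hp :
      ((Fintype.card Wt * (Finset.univ.filter fun f : F => c.query n k f = q).card : ℕ) : ℝ)
        / (Fintype.card (PIRSamp K L X F) : ℝ)
      = ((Fintype.card Wt * (Finset.univ.filter fun f : F => c.query n k' f = q).card : ℕ) : ℝ)
        / (Fintype.card (PIRSamp K L X F) : ℝ))
    have hnat : Fintype.card Wt * (Finset.univ.filter fun f : F => c.query n k f = q).card
        = Fintype.card Wt * (Finset.univ.filter fun f : F => c.query n k' f = q).card := by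
      exact_mod_cast this
    exact Nat.eq_of_mul_eq_mul_left hWtpos hnat
  have h1 : (fun ω : PIRSamp K L X F =>
      ((c.SexcRv n ω, c.Arv n k ω), (c.WleRv ((k : ℕ) + 1) ω, ω.2)))
      = fun ω : PIRSamp K L X F => e (ω.2, R (c.query n k ω.2) ω.1) := rfl
  have h2 : (fun ω : PIRSamp K L X F =>
      ((c.SexcRv n ω, c.Arv n k' ω), (c.WleRv ((k : ℕ) + 1) ω, ω.2)))
      = fun ω : PIRSamp K L X F => e (ω.2, R (c.query n k' ω.2) ω.1) := rfl
  unfold FinProb.condH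
  congr 1
  unfold pirP
  rw [h1, h2, entH_comp_injective _ _ e heinj, entH_comp_injective _ _ e heinj]
  exact entH_query_family R (c.query n k) (c.query n k') hfib
end
end

section
/- For any N-database K-message private information retrieval code, any n ∈ {1,...,N}, and any k, k' ∈ {1,...,K}, the answer entropies conditioned on the random key are equal: H(A_n^[k] | F) = H(A_n^[k'] | F). Consequently the informational download cost β'_n = H(A_n^[k] | F)/(L log₂|X|) does not depend on the retrieved message index k. -/
open scoped Classical
open Real

noncomputable section

section AuxEnt
variable {Ω : Type} [Fintype Ω]

lemma FinProb.entH_eq_sum_superset {σ : Type} (P : FinProb Ω) (Z : Ω → σ) (T : Finset σ)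
    (hT : ∀ ω, Z ω ∈ T) :
    P.entH Z = ∑ z ∈ T, -(P.prob fun ω => Z ω = z) * Real.logb 2 (P.prob fun ω => Z ω = z) := by
  unfold FinProb.entH
  refine Finset.sum_subset ?_ fun z _ hz => ?_
  · intro z hz
    obtain ⟨ω, -, rfl⟩ := Finset.mem_image.mp hz
    exact hT ω
  · have h0 : (P.prob fun ω => Z ω = z) = 0 := by
      unfold FinProb.prob
      exact Finset.sum_eq_zero fun ω _ =>
        if_neg fun h => hz (Finset.mem_image.mpr ⟨ω, Finset.mem_univ _, h⟩)
    rw [h0]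
    simp

end AuxEnt

namespace PIRCode

variable {N K L : ℕ} {X Y F : Type} {Q S : Fin N → Type}
  [Fintype X] [Nonempty X] [Fintype Y] [Fintype F] [Nonempty F]
  [∀ n, Fintype (Q n)] [∀ n, Fintype (S n)]

/-- Auxiliary: the probability mass that the answer to the fixed query `q` equals `a`. -/
def rr (c : PIRCode N K L X Y F Q S) (n : Fin N) (q : Q n) (a : List Y) : ℝ :=
  ∑ w : Fin K → Fin L → X,
    if List.ofFn (c.answer n q (c.store n w)) = a
    then (Fintype.card (PIRSamp K L X F) : ℝ)⁻¹ else 0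

lemma prob_pair (c : PIRCode N K L X Y F Q S) (n : Fin N) (k : Fin K) (a : List Y) (f : F) :
    (pirP K L X F).prob (fun ω => (c.Arv n k ω, ω.2) = (a, f)) = c.rr n (c.query n k f) a := by
  simp only [FinProb.prob, pirP, uniformProb, rr]
  rw [Fintype.sum_prod_type]
  refine Finset.sum_congr rfl fun w _ => ?_
  refine (Finset.sum_eq_single_of_mem (f := fun y : F => @ite ℝ ((c.Arv n k (w, y), (w, y).2) = (a, f))
      (Classical.propDecidable _) (Fintype.card (PIRSamp K L X F) : ℝ)⁻¹ 0) f (Finset.mem_univ f)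
    (fun g _ hg => if_neg fun h => hg (congrArg Prod.snd h))).trans ?_
  by_cases h : List.ofFn (c.answer n (c.query n k f) (c.store n w)) = a <;> simp [Arv, h]

lemma fiber_eq (c : PIRCode N K L X Y F Q S) (n : Fin N) (k k' : Fin K) (q : Q n) :
    (∑ f : F, if c.query n k f = q then (1:ℝ) else 0) =
      ∑ f : F, if c.query n k' f = q then (1:ℝ) else 0 := by
  have hpriv := c.privacy n k k' q
  have hcompute : ∀ j : Fin K,
      (pirP K L X F).prob (fun ω => c.query n j ω.2 = q) =
        ((Fintype.card (Fin K → Fin L → X) : ℝ) * (Fintype.card (PIRSamp K L X F) : ℝ)⁻¹) *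
          ∑ f : F, if c.query n j f = q then (1:ℝ) else 0 := by
    intro j
    simp only [FinProb.prob, pirP, uniformProb]
    rw [Fintype.sum_prod_type]
    have hinner : ∀ x : Fin K → Fin L → X,
        (∑ y : F, if c.query n j (x, y).2 = q
            then (Fintype.card (PIRSamp K L X F) : ℝ)⁻¹ else 0) =
          (Fintype.card (PIRSamp K L X F) : ℝ)⁻¹ *
            ∑ f : F, if c.query n j f = q then (1:ℝ) else 0 := by
      intro x
      rw [Finset.mul_sum]
      refine Finset.sum_congr rfl fun f _ => ?_
      by_cases h : c.query n j f = q <;> simp [h]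
    rw [Finset.sum_congr rfl fun x _ => hinner x, Finset.sum_const, Finset.card_univ,
      nsmul_eq_mul, mul_assoc]
  have hc : ((Fintype.card (Fin K → Fin L → X) : ℝ) *
      (Fintype.card (PIRSamp K L X F) : ℝ)⁻¹) ≠ 0 := by
    have h1 : (0:ℝ) < (Fintype.card (Fin K → Fin L → X) : ℝ) := by
      exact_mod_cast Fintype.card_pos
    have h2 : (0:ℝ) < (Fintype.card (PIRSamp K L X F) : ℝ) := by
      exact_mod_cast Fintype.card_pos
    positivity
  rw [hcompute k, hcompute k'] at hpriv
  exact mul_left_cancel₀ hc hpriv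

lemma joint_entH_eq (c : PIRCode N K L X Y F Q S) (n : Fin N) (k k' : Fin K) :
    (pirP K L X F).entH (fun ω => (c.Arv n k ω, ω.2)) =
      (pirP K L X F).entH (fun ω => (c.Arv n k' ω, ω.2)) := by
  set Aset : Finset (List Y) :=
    Finset.univ.image (fun p : Q n × (Fin K → Fin L → X) =>
      List.ofFn (c.answer n p.1 (c.store n p.2))) with hAset
  have himg : ∀ (j : Fin K) (ω : PIRSamp K L X F),
      (c.Arv n j ω, ω.2) ∈ Aset ×ˢ (Finset.univ : Finset F) := by
    intro j ω
    refine Finset.mem_product.mpr ⟨?_, Finset.mem_univ _⟩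
    exact Finset.mem_image.mpr ⟨(c.query n j ω.2, ω.1), Finset.mem_univ _, rfl⟩
  have hent : ∀ j : Fin K,
      (pirP K L X F).entH (fun ω => (c.Arv n j ω, ω.2)) =
        ∑ q : Q n, (∑ f : F, if c.query n j f = q then (1:ℝ) else 0) *
          ∑ a ∈ Aset, -(c.rr n q a) * Real.logb 2 (c.rr n q a) := by
    intro j
    rw [FinProb.entH_eq_sum_superset _ _ _ (himg j), Finset.sum_product]
    have step1 : ∀ a ∈ Aset, (∑ f : F,
        -((pirP K L X F).prob fun ω => (c.Arv n j ω, ω.2) = (a, f)) *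
          Real.logb 2 ((pirP K L X F).prob fun ω => (c.Arv n j ω, ω.2) = (a, f))) =
        ∑ f : F, -(c.rr n (c.query n j f) a) * Real.logb 2 (c.rr n (c.query n j f) a) :=
      fun a _ => Finset.sum_congr rfl fun f _ => by rw [c.prob_pair n j a f]
    rw [Finset.sum_congr rfl step1, Finset.sum_comm]
    have step2 : ∀ f : F,
        (∑ a ∈ Aset, -(c.rr n (c.query n j f) a) * Real.logb 2 (c.rr n (c.query n j f) a)) =
          ∑ q : Q n, if c.query n j f = q then
            (∑ a ∈ Aset, -(c.rr n q a) * Real.logb 2 (c.rr n q a)) else 0 := by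
      intro f
      rw [Finset.sum_ite_eq Finset.univ (c.query n j f)
        (fun q => ∑ a ∈ Aset, -(c.rr n q a) * Real.logb 2 (c.rr n q a)),
        if_pos (Finset.mem_univ _)]
    rw [Finset.sum_congr rfl fun f _ => step2 f, Finset.sum_comm]
    refine Finset.sum_congr rfl fun q _ => ?_
    rw [Finset.sum_mul]
    refine Finset.sum_congr rfl fun f _ => ?_
    by_cases h : c.query n j f = q <;> simp [h]
  rw [hent k, hent k']
  exact Finset.sum_congr rfl fun q _ => by rw [c.fiber_eq n k k' q]

end PIRCode

/-- The answer entropies conditioned on the random key do not depend on the retrieved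
message index: H(A_n^{[k]} | F) = H(A_n^{[k']} | F); consequently the informational
download cost β'_n = H(A_n^{[k]} | F)/(L log₂|X|) does not depend on k. -/
theorem answer_entropy_key_independent
{N K L : ℕ} {X Y F : Type} {Q S : Fin N → Type}
    [Fintype X] [Nonempty X] [Fintype Y] [Fintype F] [Nonempty F]
    [∀ n, Fintype (Q n)] [∀ n, Fintype (S n)]
    (c : PIRCode N K L X Y F Q S) (n : Fin N) (k k' : Fin K) :
    (pirP K L X F).condH (c.Arv n k) c.Frv = (pirP K L X F).condH (c.Arv n k') c.Frv ∧
      c.betaInfoNK n k = c.betaInfoNK n k' := by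
  have hmain : (pirP K L X F).condH (c.Arv n k) c.Frv =
      (pirP K L X F).condH (c.Arv n k') c.Frv := by
    unfold FinProb.condH PIRCode.Frv
    rw [c.joint_entH_eq n k k']
  exact ⟨hmain, by unfold PIRCode.betaInfoNK; rw [hmain]⟩
end
end

section
/- Let W_1, W_2, X_1, X_2, X_3, Y_1, Y_2, U_1, U_2, V_1, V_2 be jointly distributed random variables on finite sets such that: W_1, W_2 are independent with H(W_1) = H(W_2) = L'; H(X_1, X_2, X_3, Y_1, Y_2 | W_1, W_2) = 0; the decoding conditions H(W_1 | X_1, Y_1) = 0, H(W_2 | X_1, Y_2) = 0, H(W_2 | X_2, Y_1) = 0, H(W_1 | X_3, Y_2) = 0 hold; (Y_1, Y_2, V_1, V_2) has the same joint distribution as (Y_1, Y_2, W_1, W_2); (X_1, X_2, X_3, U_1, U_2) has the same joint distribution as (X_1, X_2, X_3, W_1, W_2); and all joint entropies H(A, W_k) for A ∈ {X_1, X_2, X_3, Y_1, Y_2} and k ∈ {1, 2} are equal. Then 3·H(Y_1, Y_2, V_2) + 3·H(X_1, X_3, U_2) + 8·H(X_1, Y_2, W_2) ≥ 12·L' + 8·H(X_1,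 W_2). -/
open scoped Classical
open Real

noncomputable section

lemma term_key {p r s q : ℝ} (hp : 0 ≤ p) (hr : p ≤ r) (hs : p ≤ s) (hq : p ≤ q)
    (hr0 : 0 ≤ r) (hs0 : 0 ≤ s) (hq0 : 0 ≤ q) :
    (p - r * s / q) / Real.log 2 ≤
      p * logb 2 p + p * logb 2 q - p * logb 2 r - p * logb 2 s := by
  have l2 : 0 < Real.log 2 := Real.log_pos one_lt_two
  rcases eq_or_lt_of_le hp with h | h
  · have : 0 ≤ r * s / q := div_nonneg (mul_nonneg hr0 hs0) hq0
    rw [← h]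
    simp only [zero_mul, add_zero, sub_zero, zero_sub, zero_add]
    exact div_nonpos_of_nonpos_of_nonneg (by linarith) l2.le
  · have hr' : 0 < r := lt_of_lt_of_le h hr
    have hs' : 0 < s := lt_of_lt_of_le h hs
    have hq' : 0 < q := lt_of_lt_of_le h hq
    have hlog : Real.log (r * s / (p * q)) ≤ r * s / (p * q) - 1 :=
      Real.log_le_sub_one_of_pos (by positivity)
    have hexp : Real.log (r * s / (p * q)) =
        Real.log r + Real.log s - Real.log p - Real.log q := by
      rw [Real.log_div (by positivity) (by positivity),
        Real.log_mul (ne_of_gt hr') (ne_of_gt hs'),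
        Real.log_mul (ne_of_gt h) (ne_of_gt hq')]
      ring
    have hps : p * (r * s / (p * q)) = r * s / q := by
      field_simp
    have hmul := mul_le_mul_of_nonneg_left hlog h.le
    have e1 : p * (r * s / (p * q) - 1) = r * s / q - p := by
      rw [mul_sub, hps, mul_one]
    have main : p - r * s / q ≤
        p * Real.log p + p * Real.log q - p * Real.log r - p * Real.log s := by
      rw [hexp] at hmul
      rw [e1] at hmul
      nlinarith
    have hRHS : p * logb 2 p + p * logb 2 q - p * logb 2 r - p * logb 2 s
        = (p * Real.log p + p * Real.log q - p * Real.log r - p * Real.log s)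
          / Real.log 2 := by
      simp only [Real.logb]
      ring
    rw [hRHS]
    gcongr

lemma array_submod {α β γ : Type} [Fintype α] [Fintype β] [Fintype γ]
    (p : α → β → γ → ℝ) (r : α → β → ℝ) (s : β → γ → ℝ) (q : β → ℝ)
    (hrdef : ∀ a b, r a b = ∑ c, p a b c)
    (hsdef : ∀ b c, s b c = ∑ a, p a b c)
    (hqdef : ∀ b, q b = ∑ a, ∑ c, p a b c)
    (hp : ∀ a b c, 0 ≤ p a b c)
    (hsum : ∑ a, ∑ b, ∑ c, p a b c = 1) :
    (∑ a, ∑ b, ∑ c, -(p a b c) * logb 2 (p a b c))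
      + (∑ b, -(q b) * logb 2 (q b))
    ≤ (∑ a, ∑ b, -(r a b) * logb 2 (r a b))
      + (∑ b, ∑ c, -(s b c) * logb 2 (s b c)) := by
  classical
  have hr0 : ∀ a b, 0 ≤ r a b := fun a b =>
    (hrdef a b) ▸ (Finset.sum_nonneg fun c _ => hp a b c)
  have hs0 : ∀ b c, 0 ≤ s b c := fun b c =>
    (hsdef b c) ▸ (Finset.sum_nonneg fun a _ => hp a b c)
  have hq0 : ∀ b, 0 ≤ q b := fun b =>
    (hqdef b) ▸ (Finset.sum_nonneg fun a _ => Finset.sum_nonneg fun c _ => hp a b c)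
  have hpr : ∀ a b c, p a b c ≤ r a b := fun a b c => (hrdef a b) ▸
    Finset.single_le_sum (f := fun c => p a b c) (fun c _ => hp a b c) (Finset.mem_univ c)
  have hps : ∀ a b c, p a b c ≤ s b c := fun a b c => (hsdef b c) ▸
    Finset.single_le_sum (f := fun a => p a b c) (fun a _ => hp a b c) (Finset.mem_univ a)
  have hrq : ∀ a b, r a b ≤ q b := by
    intro a b
    rw [hqdef b]
    calc r a b = ∑ c, p a b c := hrdef a b
      _ ≤ ∑ a, ∑ c, p a b c :=
        Finset.single_le_sum (f := fun a => ∑ c, p a b c)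
          (fun a _ => Finset.sum_nonneg fun c _ => hp a b c) (Finset.mem_univ a)
  have hpq : ∀ a b c, p a b c ≤ q b := fun a b c => (hpr a b c).trans (hrq a b)
  have hsq : ∀ b, ∑ c, s b c = q b := by
    intro b
    rw [hqdef b, Finset.sum_comm]
    exact Finset.sum_congr rfl fun c _ => hsdef b c
  have hrq' : ∀ b, ∑ a, r a b = q b := by
    intro b
    rw [hqdef b]
    exact Finset.sum_congr rfl fun a _ => hrdef a b
  have hrs : ∑ a, ∑ b, ∑ c, r a b * s b c / q b = 1 := by
    have inner : ∀ a b, ∑ c, r a b * s b c / q b = r a b * (q b / q b) := by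
      intro a b
      simp only [mul_div_assoc]
      rw [← Finset.mul_sum, ← Finset.sum_div, hsq b]
    have outer : ∀ b, ∑ a, r a b * (q b / q b) = q b := by
      intro b
      rw [← Finset.sum_mul, hrq' b]
      rcases eq_or_ne (q b) 0 with h | h
      · simp [h]
      · rw [div_self h, mul_one]
    calc ∑ a, ∑ b, ∑ c, r a b * s b c / q b
        = ∑ a, ∑ b, r a b * (q b / q b) :=
          Finset.sum_congr rfl fun a _ => Finset.sum_congr rfl fun b _ => inner a b
      _ = ∑ b, ∑ a, r a b * (q b / q b) := Finset.sum_comm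
      _ = ∑ b, q b := Finset.sum_congr rfl fun b _ => outer b
      _ = 1 := by
          rw [← hsum, Finset.sum_comm]
          exact Finset.sum_congr rfl fun b _ => by rw [hqdef b]
  have key : ∀ a b c, (p a b c - r a b * s b c / q b) / Real.log 2 ≤
      -(p a b c) * logb 2 (r a b) + -(p a b c) * logb 2 (s b c)
        - -(p a b c) * logb 2 (p a b c) - -(p a b c) * logb 2 (q b) := by
    intro a b c
    have := term_key (hp a b c) (hpr a b c) (hps a b c) (hpq a b c)
      (hr0 a b) (hs0 b c) (hq0 b)
    linarith
  have hsum3 : ∑ a, ∑ b, ∑ c, ((p a b c - r a b * s b c / q b) / Real.log 2) = 0 := by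
    have h1 : ∑ a, ∑ b, ∑ c, (p a b c - r a b * s b c / q b) = 0 := by
      simp only [Finset.sum_sub_distrib]
      rw [hsum, hrs]
      ring
    simp only [div_eq_mul_inv] at h1 ⊢
    simp only [← Finset.sum_mul]
    rw [h1, zero_mul]
  have big : 0 ≤ ∑ a, ∑ b, ∑ c,
      (-(p a b c) * logb 2 (r a b) + -(p a b c) * logb 2 (s b c)
        - -(p a b c) * logb 2 (p a b c) - -(p a b c) * logb 2 (q b)) := by
    rw [← hsum3]
    exact Finset.sum_le_sum fun a _ => Finset.sum_le_sum fun b _ =>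
      Finset.sum_le_sum fun c _ => key a b c
  have E3 : (∑ a, ∑ b, -(r a b) * logb 2 (r a b))
      = ∑ a, ∑ b, ∑ c, -(p a b c) * logb 2 (r a b) := by
    refine Finset.sum_congr rfl fun a _ => Finset.sum_congr rfl fun b _ => ?_
    rw [hrdef a b]
    simp only [neg_mul, Finset.sum_neg_distrib, ← Finset.sum_mul]
  have E4 : (∑ b, ∑ c, -(s b c) * logb 2 (s b c))
      = ∑ a, ∑ b, ∑ c, -(p a b c) * logb 2 (s b c) := by
    have h1 : ∀ b c, -(s b c) * logb 2 (s b c) = ∑ a, -(p a b c) * logb 2 (s b c) := by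
      intro b c
      rw [hsdef b c]
      simp only [neg_mul, Finset.sum_neg_distrib, ← Finset.sum_mul]
    calc ∑ b, ∑ c, -(s b c) * logb 2 (s b c)
        = ∑ b, ∑ c, ∑ a, -(p a b c) * logb 2 (s b c) :=
          Finset.sum_congr rfl fun b _ => Finset.sum_congr rfl fun c _ => h1 b c
      _ = ∑ b, ∑ a, ∑ c, -(p a b c) * logb 2 (s b c) :=
          Finset.sum_congr rfl fun b _ => Finset.sum_comm
      _ = ∑ a, ∑ b, ∑ c, -(p a b c) * logb 2 (s b c) := Finset.sum_comm
  have E2 : (∑ b, -(q b) * logb 2 (q b))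
      = ∑ a, ∑ b, ∑ c, -(p a b c) * logb 2 (q b) := by
    have h1 : ∀ b, -(q b) * logb 2 (q b) = ∑ a, ∑ c, -(p a b c) * logb 2 (q b) := by
      intro b
      rw [hqdef b]
      simp only [neg_mul, Finset.sum_neg_distrib, ← Finset.sum_mul]
    calc ∑ b, -(q b) * logb 2 (q b)
        = ∑ b, ∑ a, ∑ c, -(p a b c) * logb 2 (q b) :=
          Finset.sum_congr rfl fun b _ => h1 b
      _ = ∑ a, ∑ b, ∑ c, -(p a b c) * logb 2 (q b) := Finset.sum_comm
  rw [E2, E3, E4]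
  have expand : ∑ a, ∑ b, ∑ c,
      (-(p a b c) * logb 2 (r a b) + -(p a b c) * logb 2 (s b c)
        - -(p a b c) * logb 2 (p a b c) - -(p a b c) * logb 2 (q b))
      = (∑ a, ∑ b, ∑ c, -(p a b c) * logb 2 (r a b))
        + (∑ a, ∑ b, ∑ c, -(p a b c) * logb 2 (s b c))
        - (∑ a, ∑ b, ∑ c, -(p a b c) * logb 2 (p a b c))
        - (∑ a, ∑ b, ∑ c, -(p a b c) * logb 2 (q b)) := by
    simp only [Finset.sum_sub_distrib, Finset.sum_add_distrib]
  rw [expand] at big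
  linarith
namespace Aux
variable {Ω : Type} [Fintype Ω] (P : FinProb Ω)

lemma prob_nonneg (E : Ω → Prop) : 0 ≤ P.prob E :=
  Finset.sum_nonneg fun ω _ => by
    by_cases h : E ω <;> simp [FinProb.prob, h, P.nonneg ω]

lemma prob_congr {E E' : Ω → Prop} (h : ∀ ω, E ω ↔ E' ω) : P.prob E = P.prob E' :=
  Finset.sum_congr rfl fun ω _ => by rw [h ω]

lemma prob_mono {E E' : Ω → Prop} (h : ∀ ω, E ω → E' ω) : P.prob E ≤ P.prob E' :=
  Finset.sum_le_sum fun ω _ => by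
    by_cases hE : E ω
    · simp [hE, h ω hE]
    · simp [hE]; by_cases hE' : E' ω <;> simp [hE', P.nonneg ω]

lemma prob_split {α : Type} [Fintype α] (E : Ω → Prop) (A : Ω → α) :
    P.prob E = ∑ a : α, P.prob (fun ω => E ω ∧ A ω = a) := by
  unfold FinProb.prob
  rw [Finset.sum_comm]
  refine Finset.sum_congr rfl fun ω _ => ?_
  by_cases hE : E ω
  · simp [hE]
  · simp [hE]

lemma sum_prob_eq_one {σ : Type} [Fintype σ] (Z : Ω → σ) :
    ∑ z : σ, P.prob (fun ω => Z ω = z) = 1 := by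
  have := prob_split P (fun _ => True) Z
  simp [FinProb.prob, P.sum_one] at this ⊢
  rw [← this]

lemma prob_eq_zero {σ : Type} (Z : Ω → σ) (z : σ) (h : ∀ ω, Z ω ≠ z) :
    P.prob (fun ω => Z ω = z) = 0 := by
  unfold FinProb.prob; exact Finset.sum_eq_zero fun ω _ => by simp [h ω]

lemma entH_eq_sum_subset {σ : Type} (Z : Ω → σ) (S : Finset σ)
    (hS : Finset.univ.image Z ⊆ S) :
    P.entH Z = ∑ z ∈ S,
      -(P.prob fun ω => Z ω = z) * Real.logb 2 (P.prob fun ω => Z ω = z) := by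
  unfold FinProb.entH
  refine Finset.sum_subset hS fun z _ hz => ?_
  have : P.prob (fun ω => Z ω = z) = 0 := by
    refine prob_eq_zero P Z z fun ω h => hz ?_
    exact Finset.mem_image.2 ⟨ω, Finset.mem_univ ω, h⟩
  simp [this]

lemma entH_eq_sum {σ : Type} [Fintype σ] (Z : Ω → σ) :
    P.entH Z = ∑ z : σ,
      -(P.prob fun ω => Z ω = z) * Real.logb 2 (P.prob fun ω => Z ω = z) :=
  entH_eq_sum_subset P Z Finset.univ (Finset.subset_univ _)

lemma entH_congr_dist {σ : Type} [Fintype σ] (Z Z' : Ω → σ)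
    (h : ∀ z, P.prob (fun ω => Z ω = z) = P.prob (fun ω => Z' ω = z)) :
    P.entH Z = P.entH Z' := by
  rw [entH_eq_sum, entH_eq_sum]
  exact Finset.sum_congr rfl fun z _ => by rw [h z]

lemma entH_comp_inj {σ τ : Type} (Z : Ω → σ) (f : σ → τ) (hf : Function.Injective f) :
    P.entH (fun ω => f (Z ω)) = P.entH Z := by
  unfold FinProb.entH
  have himg : (Finset.univ.image fun ω => f (Z ω)) = (Finset.univ.image Z).image f := by
    rw [Finset.image_image]; rfl
  rw [himg, Finset.sum_image (fun a _ b _ h => hf h)]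
  refine Finset.sum_congr rfl fun z _ => ?_
  have : P.prob (fun ω => f (Z ω) = f z) = P.prob (fun ω => Z ω = z) :=
    prob_congr P fun ω => ⟨fun h => hf h, fun h => by rw [h]⟩
  rw [this]

/-- termwise: 0 ≤ p ≤ q → -p logb p ≥ -p logb q -/
lemma term_mono {p q : ℝ} (hp : 0 ≤ p) (hpq : p ≤ q) :
    -p * Real.logb 2 q ≤ -p * Real.logb 2 p := by
  rcases eq_or_lt_of_le hp with h | h
  · simp [← h]
  · have hl := Real.logb_le_logb_of_le (b := 2) one_lt_two h hpq
    nlinarith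

/-- H(B) ≤ H(A,B) -/
lemma entH_snd_le {α β : Type} [Fintype α] [Fintype β] (A : Ω → α) (B : Ω → β) :
    P.entH B ≤ P.entH (fun ω => (A ω, B ω)) := by
  rw [entH_eq_sum P B, entH_eq_sum P (fun ω => (A ω, B ω)), Fintype.sum_prod_type_right]
  have hq : ∀ b, P.prob (fun ω => B ω = b)
      = ∑ a : α, P.prob (fun ω => (A ω, B ω) = (a, b)) := fun b => by
    rw [prob_split P _ A]
    exact Finset.sum_congr rfl fun a _ => prob_congr P fun ω => by
      simp [Prod.ext_iff, and_comm]
  refine Finset.sum_le_sum fun b _ => ?_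
  rw [hq b, neg_mul, Finset.sum_mul, ← Finset.sum_neg_distrib]
  refine Finset.sum_le_sum fun a _ => ?_
  rw [← neg_mul]
  exact term_mono (prob_nonneg P _)
    (Finset.single_le_sum (f := fun a' => P.prob fun ω => (A ω, B ω) = (a', b))
      (fun _ _ => prob_nonneg P _) (Finset.mem_univ a))

lemma entH_comp_le {σ τ : Type} [Fintype σ] [Fintype τ] (Z : Ω → σ) (Z' : Ω → τ)
    (f : σ → τ) (h : ∀ ω, Z' ω = f (Z ω)) : P.entH Z' ≤ P.entH Z := by
  have h1 : P.entH Z' = P.entH (fun ω => f (Z ω)) := by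
    congr 1; funext ω; rw [h ω]
  have h2 : P.entH (fun ω => f (Z ω)) ≤ P.entH (fun ω => (Z ω, f (Z ω))) :=
    entH_snd_le P Z (fun ω => f (Z ω))
  have h3 : P.entH (fun ω => (Z ω, f (Z ω))) = P.entH Z :=
    entH_comp_inj P Z (fun s => (s, f s)) (fun a b hab => congrArg Prod.fst hab)
  linarith

lemma entH_eq_of_comp₂ {σ τ : Type} [Fintype σ] [Fintype τ] (Z : Ω → σ) (Z' : Ω → τ)
    (f : σ → τ) (g : τ → σ) (h1 : ∀ ω, Z' ω = f (Z ω)) (h2 : ∀ ω, Z ω = g (Z' ω)) :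
    P.entH Z = P.entH Z' :=
  le_antisymm (entH_comp_le P Z' Z g h2) (entH_comp_le P Z Z' f h1)

/-- Submodularity: H(A,B,C) + H(B) ≤ H(A,B) + H(B,C). -/
lemma submod {α β γ : Type} [Fintype α] [Fintype β] [Fintype γ]
    (A : Ω → α) (B : Ω → β) (C : Ω → γ) :
    P.entH (fun ω => (A ω, B ω, C ω)) + P.entH B
      ≤ P.entH (fun ω => (A ω, B ω)) + P.entH (fun ω => (B ω, C ω)) := by
  have hrdef : ∀ (a : α) (b : β), (P.prob fun ω => (A ω, B ω) = (a, b))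
      = ∑ c, P.prob fun ω => (A ω, B ω, C ω) = (a, b, c) := by
    intro a b
    rw [prob_split P _ C]
    exact Finset.sum_congr rfl fun c _ => prob_congr P fun ω => by
      simp [Prod.ext_iff, and_assoc]
  have hsdef : ∀ (b : β) (c : γ), (P.prob fun ω => (B ω, C ω) = (b, c))
      = ∑ a, P.prob fun ω => (A ω, B ω, C ω) = (a, b, c) := by
    intro b c
    rw [prob_split P _ A]
    exact Finset.sum_congr rfl fun a _ => prob_congr P fun ω => by
      simp [Prod.ext_iff]
      tauto
  have hqdef : ∀ (b : β), (P.prob fun ω => B ω = b)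
      = ∑ a, ∑ c, P.prob fun ω => (A ω, B ω, C ω) = (a, b, c) := by
    intro b
    rw [prob_split P _ (fun ω => (A ω, C ω)), Fintype.sum_prod_type]
    exact Finset.sum_congr rfl fun a _ => Finset.sum_congr rfl fun c _ =>
      prob_congr P fun ω => by
        simp [Prod.ext_iff]
        tauto
  have hsum : ∑ a, ∑ b, ∑ c, (P.prob fun ω => (A ω, B ω, C ω) = (a, b, c)) = 1 := by
    have := sum_prob_eq_one P (fun ω => (A ω, B ω, C ω))
    rw [Fintype.sum_prod_type] at this
    rw [← this]
    exact Finset.sum_congr rfl fun a _ => (Fintype.sum_prod_type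
      (fun y : β × γ => P.prob fun ω => (A ω, B ω, C ω) = (a, y))).symm
  have h1 : P.entH (fun ω => (A ω, B ω, C ω))
      = ∑ a, ∑ b, ∑ c, -(P.prob fun ω => (A ω, B ω, C ω) = (a, b, c))
          * Real.logb 2 (P.prob fun ω => (A ω, B ω, C ω) = (a, b, c)) := by
    rw [entH_eq_sum]
    rw [Fintype.sum_prod_type]
    exact Finset.sum_congr rfl fun a _ => Fintype.sum_prod_type
      (fun y : β × γ => -(P.prob fun ω => (A ω, B ω, C ω) = (a, y))
        * Real.logb 2 (P.prob fun ω => (A ω, B ω, C ω) = (a, y)))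
  have h2 : P.entH (fun ω => (A ω, B ω))
      = ∑ a, ∑ b, -(P.prob fun ω => (A ω, B ω) = (a, b))
          * Real.logb 2 (P.prob fun ω => (A ω, B ω) = (a, b)) := by
    rw [entH_eq_sum, Fintype.sum_prod_type]
  have h3 : P.entH (fun ω => (B ω, C ω))
      = ∑ b, ∑ c, -(P.prob fun ω => (B ω, C ω) = (b, c))
          * Real.logb 2 (P.prob fun ω => (B ω, C ω) = (b, c)) := by
    rw [entH_eq_sum, Fintype.sum_prod_type]
  rw [h1, h2, h3, entH_eq_sum P B]
  exact array_submod _ _ _ _ hrdef hsdef hqdef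
    (fun a b c => prob_nonneg P _) hsum

/-- If H(Z|C) = 0 then H(Z,C,D) = H(C,D). -/
lemma condH_zero_ext {σ τ υ : Type} [Fintype σ] [Fintype τ] [Fintype υ]
    (Z : Ω → σ) (C : Ω → τ) (D : Ω → υ)
    (h : P.entH (fun ω => (Z ω, C ω)) = P.entH C) :
    P.entH (fun ω => (Z ω, C ω, D ω)) = P.entH (fun ω => (C ω, D ω)) := by
  have hsub := submod P Z C D
  have hmono := entH_snd_le P Z (fun ω => (C ω, D ω))
  have hCD := submod P Z C D
  linarith

lemma entH_pair_indep {α β : Type} [Fintype α] [Fintype β] (A : Ω → α) (B : Ω → β)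
    (h : ∀ a b, P.prob (fun ω => A ω = a ∧ B ω = b)
      = P.prob (fun ω => A ω = a) * P.prob (fun ω => B ω = b)) :
    P.entH (fun ω => (A ω, B ω)) = P.entH A + P.entH B := by
  have hF : ∀ a b, (P.prob fun ω => (A ω, B ω) = (a, b))
      = (P.prob fun ω => A ω = a) * (P.prob fun ω => B ω = b) := by
    intro a b
    rw [← h a b]
    exact prob_congr P fun ω => by simp [Prod.ext_iff]
  have term : ∀ a b, -(P.prob fun ω => (A ω, B ω) = (a, b))
        * Real.logb 2 (P.prob fun ω => (A ω, B ω) = (a, b))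
      = (P.prob fun ω => B ω = b) * (-(P.prob fun ω => A ω = a)
          * Real.logb 2 (P.prob fun ω => A ω = a))
        + (P.prob fun ω => A ω = a) * (-(P.prob fun ω => B ω = b)
          * Real.logb 2 (P.prob fun ω => B ω = b)) := by
    intro a b
    rw [hF a b]
    rcases eq_or_ne (P.prob fun ω => A ω = a) 0 with ha | ha
    · simp [ha]
    · rcases eq_or_ne (P.prob fun ω => B ω = b) 0 with hb | hb
      · simp [hb]
      · rw [Real.logb_mul ha hb]
        ring
  rw [entH_eq_sum P (fun ω => (A ω, B ω)), Fintype.sum_prod_type,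
    entH_eq_sum P A, entH_eq_sum P B]
  calc ∑ a, ∑ b, -(P.prob fun ω => (A ω, B ω) = (a, b))
        * Real.logb 2 (P.prob fun ω => (A ω, B ω) = (a, b))
      = ∑ a, ∑ b, ((P.prob fun ω => B ω = b) * (-(P.prob fun ω => A ω = a)
          * Real.logb 2 (P.prob fun ω => A ω = a))
        + (P.prob fun ω => A ω = a) * (-(P.prob fun ω => B ω = b)
          * Real.logb 2 (P.prob fun ω => B ω = b))) :=
        Finset.sum_congr rfl fun a _ => Finset.sum_congr rfl fun b _ => term a b
    _ = ∑ a, ((∑ b, P.prob fun ω => B ω = b) * (-(P.prob fun ω => A ω = a)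
          * Real.logb 2 (P.prob fun ω => A ω = a))
        + (P.prob fun ω => A ω = a) * ∑ b, (-(P.prob fun ω => B ω = b)
          * Real.logb 2 (P.prob fun ω => B ω = b))) := by
        refine Finset.sum_congr rfl fun a _ => ?_
        rw [Finset.sum_add_distrib, ← Finset.sum_mul, ← Finset.mul_sum]
    _ = _ := by
        rw [sum_prob_eq_one P B]
        simp only [one_mul]
        rw [Finset.sum_add_distrib, ← Finset.sum_mul, sum_prob_eq_one P A, one_mul]

end Aux

/-- An intermediate entropy inequality in the proof of 3α + 8β ≥ 10:
3·H(Y₁,Y₂,V₂) + 3·H(X₁,X₃,U₂) + 8·H(X₁,Y₂,W₂) ≥ 12·L' + 8·H(X₁,W₂). -/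
theorem intermediate_entropy_inequality
    {Ω A1 A2 B1 B2 B3 C1 C2 : Type} [Fintype Ω]
    [Fintype A1] [Fintype A2] [Fintype B1] [Fintype B2] [Fintype B3]
    [Fintype C1] [Fintype C2]
    (P : FinProb Ω)
    (W1 U1 V1 : Ω → A1) (W2 U2 V2 : Ω → A2)
    (X1 : Ω → B1) (X2 : Ω → B2) (X3 : Ω → B3) (Y1 : Ω → C1) (Y2 : Ω → C2) (L' : ℝ)
    (hHW1 : P.entH W1 = L') (hHW2 : P.entH W2 = L')
    (hindep : ∀ (a : A1) (b : A2),
      P.prob (fun ω => W1 ω = a ∧ W2 ω = b) =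
        P.prob (fun ω => W1 ω = a) * P.prob (fun ω => W2 ω = b))
    (hdet : P.condH (fun ω => (X1 ω, X2 ω, X3 ω, Y1 ω, Y2 ω)) (fun ω => (W1 ω, W2 ω)) = 0)
    (hd1 : P.condH W1 (fun ω => (X1 ω, Y1 ω)) = 0)
    (hd2 : P.condH W2 (fun ω => (X1 ω, Y2 ω)) = 0)
    (hd3 : P.condH W2 (fun ω => (X2 ω, Y1 ω)) = 0)
    (hd4 : P.condH W1 (fun ω => (X3 ω, Y2 ω)) = 0)
    (hmirrorY : ∀ (y : C1 × C2) (v : A1 × A2),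
      P.prob (fun ω => (Y1 ω, Y2 ω) = y ∧ (V1 ω, V2 ω) = v)
        = P.prob (fun ω => (Y1 ω, Y2 ω) = y ∧ (W1 ω, W2 ω) = v))
    (hmirrorX : ∀ (x : B1 × B2 × B3) (u : A1 × A2),
      P.prob (fun ω => (X1 ω, X2 ω, X3 ω) = x ∧ (U1 ω, U2 ω) = u)
        = P.prob (fun ω => (X1 ω, X2 ω, X3 ω) = x ∧ (W1 ω, W2 ω) = u))
    (hj1 : P.entH (fun ω => (X1 ω, W1 ω)) = P.entH (fun ω => (X1 ω, W2 ω)))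
    (hj2 : P.entH (fun ω => (X1 ω, W1 ω)) = P.entH (fun ω => (X2 ω, W1 ω)))
    (hj3 : P.entH (fun ω => (X1 ω, W1 ω)) = P.entH (fun ω => (X2 ω, W2 ω)))
    (hj4 : P.entH (fun ω => (X1 ω, W1 ω)) = P.entH (fun ω => (X3 ω, W1 ω)))
    (hj5 : P.entH (fun ω => (X1 ω, W1 ω)) = P.entH (fun ω => (X3 ω, W2 ω)))
    (hj6 : P.entH (fun ω => (X1 ω, W1 ω)) = P.entH (fun ω => (Y1 ω, W1 ω)))
    (hj7 : P.entH (fun ω => (X1 ω, W1 ω)) = P.entH (fun ω => (Y1 ω, W2 ω)))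
    (hj8 : P.entH (fun ω => (X1 ω, W1 ω)) = P.entH (fun ω => (Y2 ω, W1 ω)))
    (hj9 : P.entH (fun ω => (X1 ω, W1 ω)) = P.entH (fun ω => (Y2 ω, W2 ω))) :
    3 * P.entH (fun ω => (Y1 ω, Y2 ω, V2 ω)) + 3 * P.entH (fun ω => (X1 ω, X3 ω, U2 ω))
        + 8 * P.entH (fun ω => (X1 ω, Y2 ω, W2 ω))
      ≥ 12 * L' + 8 * P.entH (fun ω => (X1 ω, W2 ω)) := by
  classical
  -- abbreviations are used inline; open the auxiliary lemmas
  have h2L : P.entH (fun ω => (W1 ω, W2 ω)) = L' + L' := by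
    rw [Aux.entH_pair_indep P W1 W2 hindep, hHW1, hHW2]
  have hfull : P.entH
      (fun ω => ((X1 ω, X2 ω, X3 ω, Y1 ω, Y2 ω), (W1 ω, W2 ω))) = L' + L' := by
    have h := hdet
    simp only [FinProb.condH] at h
    linarith
  -- H(X1,X3,Y2,W1,W2) = 2L'
  have hT5x : P.entH (fun ω => (X1 ω, X3 ω, Y2 ω, W1 ω, W2 ω)) = L' + L' := by
    have hle : P.entH (fun ω => (X1 ω, X3 ω, Y2 ω, W1 ω, W2 ω)) ≤ L' + L' := by
      rw [← hfull]
      exact Aux.entH_comp_le P _ _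
        (fun q => (q.1.1, q.1.2.2.1, q.1.2.2.2.2, q.2.1, q.2.2)) (fun ω => rfl)
    have hrel : P.entH (fun ω => (X1 ω, X3 ω, Y2 ω, W1 ω, W2 ω))
        = P.entH (fun ω => ((X1 ω, X3 ω, Y2 ω), (W1 ω, W2 ω))) :=
      Aux.entH_eq_of_comp₂ P _ _
        (fun t => ((t.1, t.2.1, t.2.2.1), (t.2.2.2.1, t.2.2.2.2)))
        (fun t => (t.1.1, t.1.2.1, t.1.2.2, t.2.1, t.2.2))
        (fun ω => rfl) (fun ω => rfl)
    have hge : L' + L' ≤ P.entH (fun ω => ((X1 ω, X3 ω, Y2 ω), (W1 ω, W2 ω))) := by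
      rw [← h2L]
      exact Aux.entH_snd_le P (fun ω => (X1 ω, X3 ω, Y2 ω)) (fun ω => (W1 ω, W2 ω))
    linarith
  -- H(X1,Y1,Y2,W1,W2) = 2L'
  have hT5y : P.entH (fun ω => (X1 ω, Y1 ω, Y2 ω, W1 ω, W2 ω)) = L' + L' := by
    have hle : P.entH (fun ω => (X1 ω, Y1 ω, Y2 ω, W1 ω, W2 ω)) ≤ L' + L' := by
      rw [← hfull]
      exact Aux.entH_comp_le P _ _
        (fun q => (q.1.1, q.1.2.2.2.1, q.1.2.2.2.2, q.2.1, q.2.2)) (fun ω => rfl)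
    have hrel : P.entH (fun ω => (X1 ω, Y1 ω, Y2 ω, W1 ω, W2 ω))
        = P.entH (fun ω => ((X1 ω, Y1 ω, Y2 ω), (W1 ω, W2 ω))) :=
      Aux.entH_eq_of_comp₂ P _ _
        (fun t => ((t.1, t.2.1, t.2.2.1), (t.2.2.2.1, t.2.2.2.2)))
        (fun t => (t.1.1, t.1.2.1, t.1.2.2, t.2.1, t.2.2))
        (fun ω => rfl) (fun ω => rfl)
    have hge : L' + L' ≤ P.entH (fun ω => ((X1 ω, Y1 ω, Y2 ω), (W1 ω, W2 ω))) := by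
      rw [← h2L]
      exact Aux.entH_snd_le P (fun ω => (X1 ω, Y1 ω, Y2 ω)) (fun ω => (W1 ω, W2 ω))
    linarith
  -- drop W1 using the decoding conditions
  have hd4' : P.entH (fun ω => (W1 ω, (X3 ω, Y2 ω))) = P.entH (fun ω => (X3 ω, Y2 ω)) := by
    have h := hd4
    simp only [FinProb.condH] at h
    linarith
  have hext4 : P.entH (fun ω => (W1 ω, ((X3 ω, Y2 ω), (X1 ω, W2 ω))))
      = P.entH (fun ω => ((X3 ω, Y2 ω), (X1 ω, W2 ω))) :=
    Aux.condH_zero_ext P W1 (fun ω => (X3 ω, Y2 ω)) (fun ω => (X1 ω, W2 ω)) hd4'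
  have rel1 : P.entH (fun ω => (W1 ω, ((X3 ω, Y2 ω), (X1 ω, W2 ω))))
      = P.entH (fun ω => (X1 ω, X3 ω, Y2 ω, W1 ω, W2 ω)) :=
    Aux.entH_eq_of_comp₂ P _ _
      (fun t => (t.2.2.1, t.2.1.1, t.2.1.2, t.1, t.2.2.2))
      (fun t => (t.2.2.2.1, ((t.2.1, t.2.2.1), (t.1, t.2.2.2.2))))
      (fun ω => rfl) (fun ω => rfl)
  have rel2 : P.entH (fun ω => ((X3 ω, Y2 ω), (X1 ω, W2 ω)))
      = P.entH (fun ω => (X1 ω, X3 ω, Y2 ω, W2 ω)) :=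
    Aux.entH_eq_of_comp₂ P _ _
      (fun t => (t.2.1, t.1.1, t.1.2, t.2.2))
      (fun t => ((t.2.1, t.2.2.1), (t.1, t.2.2.2)))
      (fun ω => rfl) (fun ω => rfl)
  have e1 : P.entH (fun ω => (X1 ω, X3 ω, Y2 ω, W2 ω)) = L' + L' := by
    rw [← rel2, ← hext4, rel1, hT5x]
  have hd1' : P.entH (fun ω => (W1 ω, (X1 ω, Y1 ω))) = P.entH (fun ω => (X1 ω, Y1 ω)) := by
    have h := hd1
    simp only [FinProb.condH] at h
    linarith
  have hext1 : P.entH (fun ω => (W1 ω, ((X1 ω, Y1 ω), (Y2 ω, W2 ω))))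
      = P.entH (fun ω => ((X1 ω, Y1 ω), (Y2 ω, W2 ω))) :=
    Aux.condH_zero_ext P W1 (fun ω => (X1 ω, Y1 ω)) (fun ω => (Y2 ω, W2 ω)) hd1'
  have rel1y : P.entH (fun ω => (W1 ω, ((X1 ω, Y1 ω), (Y2 ω, W2 ω))))
      = P.entH (fun ω => (X1 ω, Y1 ω, Y2 ω, W1 ω, W2 ω)) :=
    Aux.entH_eq_of_comp₂ P _ _
      (fun t => (t.2.1.1, t.2.1.2, t.2.2.1, t.1, t.2.2.2))
      (fun t => (t.2.2.2.1, ((t.1, t.2.1), (t.2.2.1, t.2.2.2.2))))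
      (fun ω => rfl) (fun ω => rfl)
  have rel2y : P.entH (fun ω => ((X1 ω, Y1 ω), (Y2 ω, W2 ω)))
      = P.entH (fun ω => (X1 ω, Y1 ω, Y2 ω, W2 ω)) :=
    Aux.entH_eq_of_comp₂ P _ _
      (fun t => (t.1.1, t.1.2, t.2.1, t.2.2))
      (fun t => ((t.1, t.2.1), (t.2.2.1, t.2.2.2)))
      (fun ω => rfl) (fun ω => rfl)
  have e2 : P.entH (fun ω => (X1 ω, Y1 ω, Y2 ω, W2 ω)) = L' + L' := by
    rw [← rel2y, ← hext1, rel1y, hT5y]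
  -- submodularity instances
  have s1 : P.entH (fun ω => (X1 ω, X3 ω, Y2 ω, W2 ω)) + P.entH (fun ω => (X1 ω, W2 ω))
      ≤ P.entH (fun ω => (X1 ω, X3 ω, W2 ω)) + P.entH (fun ω => (X1 ω, Y2 ω, W2 ω)) := by
    have h := Aux.submod P X3 (fun ω => (X1 ω, W2 ω)) Y2
    have rA : P.entH (fun ω => (X3 ω, (X1 ω, W2 ω), Y2 ω))
        = P.entH (fun ω => (X1 ω, X3 ω, Y2 ω, W2 ω)) :=
      Aux.entH_eq_of_comp₂ P _ _
        (fun t => (t.2.1.1, t.1, t.2.2, t.2.1.2))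
        (fun t => (t.2.1, ((t.1, t.2.2.2), t.2.2.1)))
        (fun ω => rfl) (fun ω => rfl)
    have rB : P.entH (fun ω => (X3 ω, (X1 ω, W2 ω)))
        = P.entH (fun ω => (X1 ω, X3 ω, W2 ω)) :=
      Aux.entH_eq_of_comp₂ P _ _
        (fun t => (t.2.1, t.1, t.2.2))
        (fun t => (t.2.1, (t.1, t.2.2)))
        (fun ω => rfl) (fun ω => rfl)
    have rC : P.entH (fun ω => ((X1 ω, W2 ω), Y2 ω))
        = P.entH (fun ω => (X1 ω, Y2 ω, W2 ω)) :=
      Aux.entH_eq_of_comp₂ P _ _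
        (fun t => (t.1.1, t.2, t.1.2))
        (fun t => ((t.1, t.2.2), t.2.1))
        (fun ω => rfl) (fun ω => rfl)
    rw [rA, rB, rC] at h
    exact h
  have s2 : P.entH (fun ω => (X1 ω, Y1 ω, Y2 ω, W2 ω)) + P.entH (fun ω => (Y2 ω, W2 ω))
      ≤ P.entH (fun ω => (Y1 ω, Y2 ω, W2 ω)) + P.entH (fun ω => (X1 ω, Y2 ω, W2 ω)) := by
    have h := Aux.submod P Y1 (fun ω => (Y2 ω, W2 ω)) X1
    have rD : P.entH (fun ω => (Y1 ω, (Y2 ω, W2 ω), X1 ω))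
        = P.entH (fun ω => (X1 ω, Y1 ω, Y2 ω, W2 ω)) :=
      Aux.entH_eq_of_comp₂ P _ _
        (fun t => (t.2.2, t.1, t.2.1.1, t.2.1.2))
        (fun t => (t.2.1, ((t.2.2.1, t.2.2.2), t.1)))
        (fun ω => rfl) (fun ω => rfl)
    have rF : P.entH (fun ω => ((Y2 ω, W2 ω), X1 ω))
        = P.entH (fun ω => (X1 ω, Y2 ω, W2 ω)) :=
      Aux.entH_eq_of_comp₂ P _ _
        (fun t => (t.2, t.1.1, t.1.2))
        (fun t => ((t.2.1, t.2.2), t.1))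
        (fun ω => rfl) (fun ω => rfl)
    rw [rD, rF] at h
    exact h
  have e3 : P.entH (fun ω => (Y2 ω, W2 ω)) = P.entH (fun ω => (X1 ω, W2 ω)) :=
    hj9.symm.trans hj1
  have m1 : P.entH (fun ω => (X1 ω, W2 ω)) ≤ P.entH (fun ω => (X1 ω, Y2 ω, W2 ω)) :=
    Aux.entH_comp_le P _ _ (fun t => (t.1, t.2.2)) (fun ω => rfl)
  -- replace the pseudo messages by the genuine ones
  have g1 : P.entH (fun ω => (Y1 ω, Y2 ω, V2 ω)) = P.entH (fun ω => (Y1 ω, Y2 ω, W2 ω)) := by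
    refine Aux.entH_congr_dist P _ _ fun z => ?_
    obtain ⟨y1, y2, v2⟩ := z
    calc P.prob (fun ω => (Y1 ω, Y2 ω, V2 ω) = (y1, y2, v2))
        = ∑ v1, P.prob (fun ω => (Y1 ω, Y2 ω, V2 ω) = (y1, y2, v2) ∧ V1 ω = v1) :=
          Aux.prob_split P _ V1
      _ = ∑ v1, P.prob (fun ω => (Y1 ω, Y2 ω) = (y1, y2) ∧ (V1 ω, V2 ω) = (v1, v2)) :=
          Finset.sum_congr rfl fun v1 _ => Aux.prob_congr P fun ω => by
            simp [Prod.ext_iff]; tauto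
      _ = ∑ v1, P.prob (fun ω => (Y1 ω, Y2 ω) = (y1, y2) ∧ (W1 ω, W2 ω) = (v1, v2)) :=
          Finset.sum_congr rfl fun v1 _ => hmirrorY (y1, y2) (v1, v2)
      _ = ∑ v1, P.prob (fun ω => (Y1 ω, Y2 ω, W2 ω) = (y1, y2, v2) ∧ W1 ω = v1) :=
          Finset.sum_congr rfl fun v1 _ => Aux.prob_congr P fun ω => by
            simp [Prod.ext_iff]; tauto
      _ = P.prob (fun ω => (Y1 ω, Y2 ω, W2 ω) = (y1, y2, v2)) :=
          (Aux.prob_split P _ W1).symm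
  have g2 : P.entH (fun ω => (X1 ω, X3 ω, U2 ω)) = P.entH (fun ω => (X1 ω, X3 ω, W2 ω)) := by
    refine Aux.entH_congr_dist P _ _ fun z => ?_
    obtain ⟨x1, x3, u2⟩ := z
    calc P.prob (fun ω => (X1 ω, X3 ω, U2 ω) = (x1, x3, u2))
        = ∑ x2, P.prob (fun ω => (X1 ω, X3 ω, U2 ω) = (x1, x3, u2) ∧ X2 ω = x2) :=
          Aux.prob_split P _ X2
      _ = ∑ x2, ∑ u1, P.prob (fun ω =>
            ((X1 ω, X3 ω, U2 ω) = (x1, x3, u2) ∧ X2 ω = x2) ∧ U1 ω = u1) :=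
          Finset.sum_congr rfl fun x2 _ => Aux.prob_split P _ U1
      _ = ∑ x2, ∑ u1, P.prob (fun ω =>
            (X1 ω, X2 ω, X3 ω) = (x1, x2, x3) ∧ (U1 ω, U2 ω) = (u1, u2)) :=
          Finset.sum_congr rfl fun x2 _ => Finset.sum_congr rfl fun u1 _ =>
            Aux.prob_congr P fun ω => by simp [Prod.ext_iff]; tauto
      _ = ∑ x2, ∑ u1, P.prob (fun ω =>
            (X1 ω, X2 ω, X3 ω) = (x1, x2, x3) ∧ (W1 ω, W2 ω) = (u1, u2)) :=
          Finset.sum_congr rfl fun x2 _ => Finset.sum_congr rfl fun u1 _ =>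
            hmirrorX (x1, x2, x3) (u1, u2)
      _ = ∑ x2, ∑ u1, P.prob (fun ω =>
            ((X1 ω, X3 ω, W2 ω) = (x1, x3, u2) ∧ X2 ω = x2) ∧ W1 ω = u1) :=
          Finset.sum_congr rfl fun x2 _ => Finset.sum_congr rfl fun u1 _ =>
            Aux.prob_congr P fun ω => by simp [Prod.ext_iff]; tauto
      _ = ∑ x2, P.prob (fun ω => (X1 ω, X3 ω, W2 ω) = (x1, x3, u2) ∧ X2 ω = x2) :=
          Finset.sum_congr rfl fun x2 _ => (Aux.prob_split P _ W1).symm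
      _ = P.prob (fun ω => (X1 ω, X3 ω, W2 ω) = (x1, x3, u2)) :=
          (Aux.prob_split P _ X2).symm
  rw [g1, g2]
  linarith
end
end
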